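/- arXiv:1012.1777 — 5 statements merged into one kernel-verified Lean document; each statement's English description precedes it below -/
import Mathlib

section
/- Let D = ⟨x, y | x^(2^r) = y^(2^s) = [x,y]^2 = [x,[x,y]] = [y,[x,y]] = 1⟩ with r ≥ s ≥ 1. Then the order of D is 2^(r+s+1). -/
/-- The generator `x` of the free group on two letters. -/
def gx : FreeGroup (Fin 2) := FreeGroup.of 0

/-- The generator `y` of the free group on two letters. -/
def gy : FreeGroup (Fin 2) := FreeGroup.of 1

open scoped commutatorElement

/-- The relations of the Rédei presentation with parameters `r`, `s`:
`x^(2^r)`, `y^(2^s)`, `⁅x,y⁆^2`, `⁅x,⁅x,y⁆⁆`, `⁅y,⁅x,y⁆⁆`,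
where `⁅a,b⁆ = a*b*a⁻¹*b⁻¹`. -/
def redeiRels (r s : ℕ) : Set (FreeGroup (Fin 2)) :=
  {gx ^ (2 ^ r), gy ^ (2 ^ s), ⁅gx, gy⁆ ^ 2, ⁅gx, ⁅gx, gy⁆⁆, ⁅gy, ⁅gx, gy⁆⁆}

/-- The Rédei group `⟨x,y ∣ x^(2^r) = y^(2^s) = [x,y]^2 = [x,[x,y]] = [y,[x,y]] = 1⟩`. -/
abbrev RedeiGroup (r s : ℕ) := PresentedGroup (redeiRels r s)

/-
Since `c = ⁅x, y⁆` commutes with `x` and `y`, we have `x ^ a * y = c ^ a * y * x ^ a`, so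
every element of `D` is `y ^ b * x ^ a * c ^ e` with `a < 2 ^ r`, `b < 2 ^ s`, `e < 2`, and
`|D| ≤ 2 ^ (r + s + 1)`. Conversely, for `r, s ≥ 1` the group `D` maps onto the central extension
of `ZMod (2 ^ r) × ZMod (2 ^ s)` by `ZMod 2` whose cocycle is the product of the parities of the
two coordinates; this extension has `2 ^ (r + s + 1)` elements.
-/

section CentralCommutator

variable {G : Type*} [Group G] {x y : G}

theorem pow_mul_eq_commutatorElement_pow_mul_mul_pow (hx : Commute x ⁅x, y⁆) (n : ℕ) :
    x ^ n * y = ⁅x, y⁆ ^ n * y * x ^ n := by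
  induction n with
  | zero => simp
  | succ n ih =>
    have hxy : x * y = ⁅x, y⁆ * y * x := by rw [commutatorElement_def]; group
    calc x ^ (n + 1) * y = x * (x ^ n * y) := by rw [pow_succ', mul_assoc]
      _ = x * ⁅x, y⁆ ^ n * y * x ^ n := by rw [ih]; simp only [mul_assoc]
      _ = ⁅x, y⁆ ^ n * (x * y) * x ^ n := by rw [(hx.pow_right n).eq]; simp only [mul_assoc]
      _ = ⁅x, y⁆ ^ (n + 1) * y * x ^ (n + 1) := by
        rw [hxy, pow_succ, pow_succ']; simp only [mul_assoc]

theorem exists_eq_pow_mul_pow_mul_commutatorElement_pow (hx : Commute x ⁅x, y⁆)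
    (hy : Commute y ⁅x, y⁆) (hG : Submonoid.closure {x, y} = ⊤) (g : G) :
    ∃ a b e : ℕ, g = y ^ b * x ^ a * ⁅x, y⁆ ^ e := by
  induction g using Submonoid.induction_of_closure_eq_top_right hG with
  | one => exact ⟨0, 0, 0, by simp⟩
  | mul_right g z hz ih =>
    obtain ⟨a, b, e, rfl⟩ := ih
    obtain hz | hz : z = x ∨ z = y := hz <;> rw [hz]
    · refine ⟨a + 1, b, e, ?_⟩
      rw [mul_assoc _ _ x, ← (hx.pow_right e).eq, pow_succ]
      simp only [mul_assoc]
    · refine ⟨a, b + 1, a + e, ?_⟩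
      calc y ^ b * x ^ a * ⁅x, y⁆ ^ e * y = y ^ b * (x ^ a * y) * ⁅x, y⁆ ^ e := by
            rw [mul_assoc _ _ y, ← (hy.pow_right e).eq]; simp only [mul_assoc]
        _ = (y ^ b * ⁅x, y⁆ ^ a) * y * x ^ a * ⁅x, y⁆ ^ e := by
            rw [pow_mul_eq_commutatorElement_pow_mul_mul_pow hx]; simp only [mul_assoc]
        _ = y ^ (b + 1) * x ^ a * ⁅x, y⁆ ^ (a + e) := by
            rw [(hy.pow_pow b a).eq, pow_add ⁅x, y⁆, ← mul_assoc,
              ((hy.pow_pow (b + 1) a).mul_left (hx.pow_pow a a)).eq, pow_succ]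
            simp only [mul_assoc]

theorem surjective_pow_mul_pow_mul_commutatorElement_pow {m n k : ℕ} [NeZero m] [NeZero n]
    [NeZero k] (hx : Commute x ⁅x, y⁆) (hy : Commute y ⁅x, y⁆)
    (hG : Subgroup.closure {x, y} = ⊤) (hm : x ^ m = 1) (hn : y ^ n = 1) (hk : ⁅x, y⁆ ^ k = 1) :
    Function.Surjective fun p : Fin m × Fin n × Fin k ↦
      y ^ (p.2.1 : ℕ) * x ^ (p.1 : ℕ) * ⁅x, y⁆ ^ (p.2.2 : ℕ) := by
  have hG' : Submonoid.closure {x, y} = ⊤ := by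
    rw [← Subgroup.closure_toSubmonoid_of_isOfFinOrder, hG, Subgroup.top_toSubmonoid]
    rintro g (rfl | rfl)
    exacts [isOfFinOrder_iff_pow_eq_one.mpr ⟨m, Nat.pos_of_neZero m, hm⟩,
      isOfFinOrder_iff_pow_eq_one.mpr ⟨n, Nat.pos_of_neZero n, hn⟩]
  intro g
  obtain ⟨a, b, e, rfl⟩ := exists_eq_pow_mul_pow_mul_commutatorElement_pow hx hy hG' g
  refine ⟨(Fin.ofNat m a, Fin.ofNat n b, Fin.ofNat k e), ?_⟩
  simp only [Fin.val_ofNat, ← pow_eq_pow_mod _ hm, ← pow_eq_pow_mod _ hn,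
    ← pow_eq_pow_mod _ hk]

end CentralCommutator

@[ext]
structure Heisenberg {A B E : Type*} [AddCommGroup A] [AddCommGroup B] [AddCommGroup E]
    (β : A →+ B →+ E) where
  x : A
  y : B
  z : E

namespace Heisenberg

variable {A B E : Type*} [AddCommGroup A] [AddCommGroup B] [AddCommGroup E]
  {β : A →+ B →+ E}

instance : Mul (Heisenberg β) := ⟨fun u v ↦ ⟨u.x + v.x, u.y + v.y, u.z + v.z + β u.x v.y⟩⟩
instance : One (Heisenberg β) := ⟨⟨0, 0, 0⟩⟩
instance : Inv (Heisenberg β) := ⟨fun u ↦ ⟨-u.x, -u.y, -u.z + β u.x u.y⟩⟩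

@[simp] lemma mul_x (u v : Heisenberg β) : (u * v).x = u.x + v.x := rfl
@[simp] lemma mul_y (u v : Heisenberg β) : (u * v).y = u.y + v.y := rfl
@[simp] lemma mul_z (u v : Heisenberg β) : (u * v).z = u.z + v.z + β u.x v.y := rfl
@[simp] lemma one_x : (1 : Heisenberg β).x = 0 := rfl
@[simp] lemma one_y : (1 : Heisenberg β).y = 0 := rfl
@[simp] lemma one_z : (1 : Heisenberg β).z = 0 := rfl
@[simp] lemma inv_x (u : Heisenberg β) : u⁻¹.x = -u.x := rfl
@[simp] lemma inv_y (u : Heisenberg β) : u⁻¹.y = -u.y := rfl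
@[simp] lemma inv_z (u : Heisenberg β) : u⁻¹.z = -u.z + β u.x u.y := rfl

instance : Group (Heisenberg β) where
  mul_assoc u v w := by ext <;> simp <;> abel
  one_mul u := by ext <;> simp
  mul_one u := by ext <;> simp
  inv_mul_cancel u := by ext <;> simp

def equivProd : Heisenberg β ≃ A × B × E where
  toFun u := (u.x, u.y, u.z)
  invFun p := ⟨p.1, p.2.1, p.2.2⟩

theorem card_eq : Nat.card (Heisenberg β) = Nat.card A * Nat.card B * Nat.card E := by
  rw [Nat.card_congr (equivProd (β := β)), Nat.card_prod, Nat.card_prod, mul_assoc]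

def ofX (a : A) : Heisenberg β := ⟨a, 0, 0⟩
def ofY (b : B) : Heisenberg β := ⟨0, b, 0⟩
def ofZ (c : E) : Heisenberg β := ⟨0, 0, c⟩

@[simp] lemma ofX_zero : (ofX 0 : Heisenberg β) = 1 := rfl
@[simp] lemma ofY_zero : (ofY 0 : Heisenberg β) = 1 := rfl
@[simp] lemma ofZ_zero : (ofZ 0 : Heisenberg β) = 1 := rfl

theorem ofX_pow (a : A) (n : ℕ) : (ofX a : Heisenberg β) ^ n = ofX (n • a) := by
  induction n with
  | zero => ext <;> simp [ofX]
  | succ n ih => rw [pow_succ, ih]; ext <;> simp [ofX, succ_nsmul]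

theorem ofY_pow (b : B) (n : ℕ) : (ofY b : Heisenberg β) ^ n = ofY (n • b) := by
  induction n with
  | zero => ext <;> simp [ofY]
  | succ n ih => rw [pow_succ, ih]; ext <;> simp [ofY, succ_nsmul]

theorem ofZ_pow (c : E) (n : ℕ) : (ofZ c : Heisenberg β) ^ n = ofZ (n • c) := by
  induction n with
  | zero => ext <;> simp [ofZ]
  | succ n ih => rw [pow_succ, ih]; ext <;> simp [ofZ, succ_nsmul]

theorem commute_ofZ (c : E) (u : Heisenberg β) : Commute (ofZ c) u := by
  ext <;> simp [ofZ, add_comm]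

theorem commutatorElement_ofX_ofY (a : A) (b : B) :
    ⁅(ofX a : Heisenberg β), (ofY b : Heisenberg β)⁆ = ofZ (β a b) := by
  ext <;> simp [commutatorElement_def, ofX, ofY, ofZ]

theorem ofY_mul_ofX_mul_ofZ (a : A) (b : B) (c : E) :
    (ofY b * ofX a * ofZ c : Heisenberg β) = ⟨a, b, c⟩ := by
  ext <;> simp [ofX, ofY, ofZ]

end Heisenberg

def parityPairing {m n : ℕ} (hm : 2 ∣ m) (hn : 2 ∣ n) : ZMod m →+ ZMod n →+ ZMod 2 :=
  (AddMonoidHom.mul.comp (ZMod.castHom hm (ZMod 2)).toAddMonoidHom).compl₂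
    (ZMod.castHom hn (ZMod 2)).toAddMonoidHom

@[simp]
theorem parityPairing_one_one {m n : ℕ} (hm : 2 ∣ m) (hn : 2 ∣ n) :
    parityPairing hm hn 1 1 = 1 := by
  simp [parityPairing, ZMod.cast_one hm, ZMod.cast_one hn]

namespace RedeiGroup

variable {r s : ℕ}

def x : RedeiGroup r s := PresentedGroup.mk _ gx
def y : RedeiGroup r s := PresentedGroup.mk _ gy

theorem x_pow_two_pow : (x : RedeiGroup r s) ^ 2 ^ r = 1 := by
  rw [x, ← map_pow]
  exact PresentedGroup.one_of_mem (by simp [redeiRels])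

theorem y_pow_two_pow : (y : RedeiGroup r s) ^ 2 ^ s = 1 := by
  rw [y, ← map_pow]
  exact PresentedGroup.one_of_mem (by simp [redeiRels])

theorem commutatorElement_x_y_sq : ⁅(x : RedeiGroup r s), (y : RedeiGroup r s)⁆ ^ 2 = 1 := by
  rw [x, y, ← map_commutatorElement, ← map_pow]
  exact PresentedGroup.one_of_mem (by simp [redeiRels])

theorem commute_x_commutatorElement :
    Commute (x : RedeiGroup r s) ⁅(x : RedeiGroup r s), (y : RedeiGroup r s)⁆ := by
  rw [← commutatorElement_eq_one_iff_commute, x, y, ← map_commutatorElement,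
    ← map_commutatorElement]
  exact PresentedGroup.one_of_mem (by simp [redeiRels])

theorem commute_y_commutatorElement :
    Commute (y : RedeiGroup r s) ⁅(x : RedeiGroup r s), (y : RedeiGroup r s)⁆ := by
  rw [← commutatorElement_eq_one_iff_commute, x, y, ← map_commutatorElement,
    ← map_commutatorElement]
  exact PresentedGroup.one_of_mem (by simp [redeiRels])

theorem closure_x_y : Subgroup.closure {(x : RedeiGroup r s), y} = ⊤ := by
  rw [← PresentedGroup.closure_range_of]
  congr 1
  ext g
  simp [Fin.exists_fin_two, x, y, gx, gy, PresentedGroup.of, eq_comm]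

theorem surjective_pow_mul_pow_mul_commutatorElement_pow_x_y :
    Function.Surjective fun p : Fin (2 ^ r) × Fin (2 ^ s) × Fin 2 ↦
      (y : RedeiGroup r s) ^ (p.2.1 : ℕ) * (x : RedeiGroup r s) ^ (p.1 : ℕ) *
        ⁅(x : RedeiGroup r s), (y : RedeiGroup r s)⁆ ^ (p.2.2 : ℕ) :=
  surjective_pow_mul_pow_mul_commutatorElement_pow commute_x_commutatorElement
    commute_y_commutatorElement closure_x_y x_pow_two_pow y_pow_two_pow commutatorElement_x_y_sq

instance : Finite (RedeiGroup r s) :=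
  Finite.of_surjective _ surjective_pow_mul_pow_mul_commutatorElement_pow_x_y

theorem card_le : Nat.card (RedeiGroup r s) ≤ 2 ^ (r + s + 1) := by
  have := Nat.card_le_card_of_surjective _
    (surjective_pow_mul_pow_mul_commutatorElement_pow_x_y (r := r) (s := s))
  simpa [Nat.card_prod, pow_add, mul_assoc] using this

abbrev Model (hr : r ≠ 0) (hs : s ≠ 0) : Type :=
  Heisenberg (parityPairing (dvd_pow_self 2 hr) (dvd_pow_self 2 hs))

open Heisenberg in
def toModel (hr : r ≠ 0) (hs : s ≠ 0) : RedeiGroup r s →* Model hr hs :=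
  PresentedGroup.toGroup (f := ![ofX 1, ofY 1]) <| by
    have hx : FreeGroup.lift ![(ofX 1 : Model hr hs), ofY 1] gx = ofX 1 := FreeGroup.lift_apply_of
    have hy : FreeGroup.lift ![(ofX 1 : Model hr hs), ofY 1] gy = ofY 1 := FreeGroup.lift_apply_of
    have hc : ⁅(ofX 1 : Model hr hs), (ofY 1 : Model hr hs)⁆ = ofZ 1 := by
      rw [commutatorElement_ofX_ofY, parityPairing_one_one]
    simp only [redeiRels, Set.mem_insert_iff, Set.mem_singleton_iff]
    rintro ρ (rfl | rfl | rfl | rfl | rfl) <;>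
      simp only [map_pow, map_commutatorElement, hx, hy, hc, ofX_pow, ofY_pow, ofZ_pow]
    · rw [nsmul_one, ZMod.natCast_self, ofX_zero]
    · rw [nsmul_one, ZMod.natCast_self, ofY_zero]
    · rw [two_nsmul, ZModModule.add_self, ofZ_zero]
    all_goals exact commutatorElement_eq_one_iff_commute.mpr (commute_ofZ 1 _).symm

open Heisenberg in
theorem toModel_surjective (hr : r ≠ 0) (hs : s ≠ 0) : Function.Surjective (toModel hr hs) := by
  have hx : toModel hr hs x = ofX 1 := PresentedGroup.toGroup.of _
  have hy : toModel hr hs y = ofY 1 := PresentedGroup.toGroup.of _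
  have hc : toModel hr hs ⁅(x : RedeiGroup r s), (y : RedeiGroup r s)⁆ = ofZ 1 := by
    rw [map_commutatorElement, hx, hy, commutatorElement_ofX_ofY, parityPairing_one_one]
  rintro ⟨a, b, c⟩
  refine ⟨y ^ b.val * x ^ a.val * ⁅(x : RedeiGroup r s), (y : RedeiGroup r s)⁆ ^ c.val, ?_⟩
  simp only [map_mul, map_pow, hx, hy, hc, ofX_pow, ofY_pow, ofZ_pow, nsmul_one,
    ZMod.natCast_zmod_val, ofY_mul_ofX_mul_ofZ]

theorem le_card (hr : r ≠ 0) (hs : s ≠ 0) : 2 ^ (r + s + 1) ≤ Nat.card (RedeiGroup r s) := by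
  calc 2 ^ (r + s + 1) = Nat.card (Model hr hs) := by
        rw [Heisenberg.card_eq, Nat.card_zmod, Nat.card_zmod, Nat.card_zmod, pow_succ, pow_add]
    _ ≤ Nat.card (RedeiGroup r s) := Nat.card_le_card_of_surjective _ (toModel_surjective hr hs)

end RedeiGroup

theorem stmt0 (r s : ℕ) (hs : 1 ≤ s) (hrs : s ≤ r) :
    Nat.card (RedeiGroup r s) = 2 ^ (r + s + 1) :=
  le_antisymm RedeiGroup.card_le (RedeiGroup.le_card (by omega) (by omega))
end

section
/- Let D = ⟨x, y | x^(2^r) = y^(2^s) = [x,y]^2 = [x,[x,y]] = [y,[x,y]] = 1⟩ with r ≥ 2 and r ≥ s ≥ 1, and set z := [x,y]. Then the maximal subgroups of D are exactly ⟨x², y, z⟩ ≅ C_{2^(r-1)} × C_{2^s} × C₂, ⟨x, y², z⟩ ≅ C_{2^r} × C_{2^(s-1)} × C₂, and ⟨xy, x², z⟩ ≅ C_{2^r} × C_{2^(s-1)} × C₂. -/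
open scoped commutatorElement

/-- The image of the generator `x` in the Rédei group. -/
def Dx (r s : ℕ) : RedeiGroup r s := PresentedGroup.of 0

/-- The image of the generator `y` in the Rédei group. -/
def Dy (r s : ℕ) : RedeiGroup r s := PresentedGroup.of 1

/-- The element `z = [x,y]` of the Rédei group. -/
def Dz (r s : ℕ) : RedeiGroup r s := ⁅Dx r s, Dy r s⁆

/-!
The relations make `z = ⁅x, y⁆` central of order 2 with `y x = x z y`, so every element of `D` is
`x ^ a * y ^ b * z ^ c` with `a < 2 ^ r`, `b < 2 ^ s`, `c < 2`. The abelianisation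
`C_{2^r} × C_{2^s}` is a quotient whose kernel contains `z`, and `z ≠ 1` because sending `x` to a
quarter turn and `y` to a reflection defines a map to the dihedral group of order 8 in which `z`
survives; hence `|D| = 2 ^ (r + s + 1)`.

Each of the three subgroups is the kernel of a nontrivial character `D → C₂`, so it has index 2
and is maximal. It is generated by three commuting elements (`xy, y², z` for the third one) whose
orders multiply to `2 ^ (r + s)`, so it is the direct product of the cyclic groups they generate.
Conversely, a maximal subgroup `M` of the 2-group `D` has index 2, hence contains `z` and all
squares; it cannot contain both `x` and `y`, and whichever of `x`, `y`, `xy` it contains forces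
it to contain one of the three subgroups.
-/

section CentralCommutator

variable {G : Type*} [Group G] {x y w : G}

theorem SemiconjBy.pow_pow_of_mul_right (h : SemiconjBy y x (x * w)) (hxw : Commute x w)
    (hyw : Commute y w) (a b : ℕ) : SemiconjBy (y ^ b) (x ^ a) (x ^ a * w ^ (a * b)) := by
  have hya : SemiconjBy y (x ^ a) (x ^ a * w ^ a) := hxw.mul_pow a ▸ h.pow_right a
  induction b with
  | zero => simp
  | succ b ih =>
    rw [pow_succ', mul_add, mul_one, add_comm, pow_add, ← mul_assoc]
    exact (hya.mul_right (hyw.pow_right _)).mul_left ih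

theorem exists_eq_pow_mul_pow_mul_pow_of_mem_closure (h : SemiconjBy y x (x * w))
    (hxw : Commute x w) (hyw : Commute y w) (hx : IsOfFinOrder x) (hy : IsOfFinOrder y)
    {g : G} (hg : g ∈ Subgroup.closure {x, y}) : ∃ a b c : ℕ, g = x ^ a * y ^ b * w ^ c := by
  let S : Set G := {g | ∃ a b c : ℕ, g = x ^ a * y ^ b * w ^ c}
  have hxS : ∀ k, ∀ g ∈ S, x ^ k * g ∈ S := by
    rintro k _ ⟨a, b, c, rfl⟩
    exact ⟨k + a, b, c, by simp only [pow_add, mul_assoc]⟩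
  have hyS : ∀ k, ∀ g ∈ S, y ^ k * g ∈ S := by
    rintro k _ ⟨a, b, c, rfl⟩
    refine ⟨a, k + b, a * k + c, ?_⟩
    rw [← mul_assoc, ← mul_assoc, (h.pow_pow_of_mul_right hxw hyw a k).eq, mul_assoc _ (y ^ k),
      ← pow_add, mul_assoc (x ^ a), ← ((hyw.pow_pow _ _).eq), pow_add w]
    simp only [mul_assoc]
  have hpow : ∀ u ∈ ({x, y} : Set G), ∀ k, ∀ g ∈ S, u ^ k * g ∈ S := by
    rintro u (rfl | rfl) <;> assumption
  have hfin : ∀ u ∈ ({x, y} : Set G), ∃ k, u ^ k = u⁻¹ := by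
    rintro u (rfl | rfl)
    · exact hx.mem_powers_iff_mem_zpowers.mpr (inv_mem (Subgroup.mem_zpowers _))
    · exact hy.mem_powers_iff_mem_zpowers.mpr (inv_mem (Subgroup.mem_zpowers _))
  change g ∈ S
  induction hg using Subgroup.closure_induction_left with
  | one => exact ⟨0, 0, 0, by simp⟩
  | mul_left u hu g _ ih => simpa using hpow u hu 1 g ih
  | inv_mul_cancel u hu g _ ih =>
    obtain ⟨k, hk⟩ := hfin u hu
    simpa [hk] using hpow u hu k g ih

end CentralCommutator

namespace Subgroup

variable {G : Type*} [Group G]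

theorem commutatorElement_mem_of_index_two {H : Subgroup G} (h : H.index = 2) (a b : G) :
    ⁅a, b⁆ ∈ H := by
  simp only [commutatorElement_def, mul_mem_iff_of_index_two h, inv_mem_iff]
  tauto

theorem pow_mem_of_even {H : Subgroup G} {x : G} (hx : x ^ 2 ∈ H) {n : ℕ} (hn : Even n) :
    x ^ n ∈ H := by
  obtain ⟨k, rfl⟩ := hn
  rw [← two_mul, pow_mul]
  exact pow_mem hx k

theorem isCoatom_of_index_prime {H : Subgroup G} (h : H.index.Prime) : IsCoatom H := by
  refine ⟨fun hH => by simp [hH, Nat.not_prime_one] at h, fun K hK => index_eq_one.mp ?_⟩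
  have hmul := relIndex_mul_index hK.le
  rcases h.eq_one_or_self_of_dvd _ (Dvd.intro_left _ hmul) with hK1 | hKH
  · exact hK1
  · rw [hKH, Nat.mul_eq_right h.ne_zero, relIndex_eq_one] at hmul
    exact absurd hmul hK.not_ge

end Subgroup

theorem MonoidHom.index_ker_eq_two {G : Type*} [Group G] {f : G →* Multiplicative (ZMod 2)}
    {g : G} (hg : f g ≠ 1) : f.ker.index = 2 := by
  have : Fact (Nat.card (Multiplicative (ZMod 2))).Prime := ⟨by simp [Nat.prime_two]⟩
  rw [Subgroup.index_ker]
  rcases f.range.eq_bot_or_eq_top_of_prime_card with h | h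
  · exact absurd (Subgroup.mem_bot.mp (h ▸ MonoidHom.mem_range.mpr ⟨g, rfl⟩)) hg
  · simp [h]

theorem IsPGroup.index_eq_of_isCoatom {G : Type*} [Group G] [Finite G] {p : ℕ} [hp : Fact p.Prime]
    (hG : IsPGroup p G) {M : Subgroup G} (hM : IsCoatom M) : M.index = p := by
  obtain ⟨n, hn⟩ := (hG.to_subgroup M).exists_card_eq
  obtain ⟨k, hk⟩ := hG.index M
  have hk0 : k ≠ 0 := by
    rintro rfl
    exact hM.1 (Subgroup.index_eq_one.mp (by simpa using hk))
  have hdvd : p ^ (n + 1) ∣ Nat.card G := by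
    rw [← M.card_mul_index, hn, hk, pow_succ]
    exact mul_dvd_mul_left _ (dvd_pow_self p hk0)
  obtain ⟨K, hK, hMK⟩ := Sylow.exists_subgroup_card_pow_succ hdvd hn
  have hKtop : K = ⊤ := hM.2 K (lt_of_le_of_ne hMK fun h => by
    rw [← h, hn] at hK
    exact absurd hK (Nat.pow_right_injective hp.out.two_le |>.ne (by omega)))
  have hcard := M.card_mul_index
  rw [← Subgroup.card_top (G := G), ← hKtop, hK, hn, pow_succ] at hcard
  exact Nat.eq_of_mul_eq_mul_left (pow_pos hp.out.pos n) hcard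

section CommutingTriple

variable {G : Type*} [Group G]

def zmodHom (g : G) {N : ℕ} (hg : g ^ N = 1) : Multiplicative (ZMod N) →* G :=
  AddMonoidHom.toMultiplicativeLeft <|
    ZMod.lift N ⟨zmultiplesHom (Additive G) (Additive.ofMul g), by simp [← ofMul_pow, hg]⟩

theorem zmodHom_ofAdd_intCast (g : G) {N : ℕ} (hg : g ^ N = 1) (k : ℤ) :
    zmodHom g hg (Multiplicative.ofAdd (k : ZMod N)) = g ^ k := by
  simp [zmodHom]

theorem zmodHom_mem_zpowers (g : G) {N : ℕ} (hg : g ^ N = 1) (u : Multiplicative (ZMod N)) :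
    zmodHom g hg u ∈ Subgroup.zpowers g := by
  obtain ⟨k, hk⟩ := ZMod.intCast_surjective (Multiplicative.toAdd u)
  rw [← ofAdd_toAdd u, ← hk, zmodHom_ofAdd_intCast]
  exact Subgroup.zpow_mem_zpowers g k

theorem nonempty_mulEquiv_closure_of_commute {N₁ N₂ N₃ : ℕ} [NeZero N₁] [NeZero N₂] [NeZero N₃]
    {g₁ g₂ g₃ : G} (h₁ : g₁ ^ N₁ = 1) (h₂ : g₂ ^ N₂ = 1) (h₃ : g₃ ^ N₃ = 1)
    (h₁₂ : Commute g₁ g₂) (h₁₃ : Commute g₁ g₃) (h₂₃ : Commute g₂ g₃)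
    (hcard : N₁ * N₂ * N₃ ≤ Nat.card (Subgroup.closure {g₁, g₂, g₃})) :
    Nonempty (Subgroup.closure {g₁, g₂, g₃} ≃*
      Multiplicative (ZMod N₁) × Multiplicative (ZMod N₂) × Multiplicative (ZMod N₃)) := by
  have hcomm : ∀ {a b : G} {Na Nb : ℕ} (ha : a ^ Na = 1) (hb : b ^ Nb = 1), Commute a b →
      ∀ u v, Commute (zmodHom a ha u) (zmodHom b hb v) := by
    intro a b _ _ ha hb hab u v
    obtain ⟨k, hk⟩ := Subgroup.mem_zpowers_iff.mp (zmodHom_mem_zpowers a ha u)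
    obtain ⟨l, hl⟩ := Subgroup.mem_zpowers_iff.mp (zmodHom_mem_zpowers b hb v)
    exact hk ▸ hl ▸ hab.zpow_zpow k l
  let ψ := (zmodHom g₁ h₁).noncommCoprod ((zmodHom g₂ h₂).noncommCoprod (zmodHom g₃ h₃)
    (hcomm h₂ h₃ h₂₃)) fun u v => (hcomm h₁ h₂ h₁₂ u v.1).mul_right (hcomm h₁ h₃ h₁₃ u v.2)
  have hψ : ∀ u v t, ψ (u, v, t) = zmodHom g₁ h₁ u * (zmodHom g₂ h₂ v * zmodHom g₃ h₃ t) :=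
    fun _ _ _ => rfl
  have hrange : ψ.range = Subgroup.closure {g₁, g₂, g₃} := by
    have hmem : ∀ {g : G} {N : ℕ} (hg : g ^ N = 1), g ∈ ({g₁, g₂, g₃} : Set G) →
        ∀ u, zmodHom g hg u ∈ Subgroup.closure {g₁, g₂, g₃} := fun hg hgS u =>
      Subgroup.zpowers_le.mpr (Subgroup.subset_closure hgS) (zmodHom_mem_zpowers _ hg u)
    apply le_antisymm
    · rintro _ ⟨⟨u, v, t⟩, rfl⟩
      exact mul_mem (hmem h₁ (by simp) u) (mul_mem (hmem h₂ (by simp) v) (hmem h₃ (by simp) t))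
    · rw [Subgroup.closure_le, Set.insert_subset_iff, Set.insert_subset_iff,
        Set.singleton_subset_iff]
      refine ⟨?_, ?_, ?_⟩
      · exact ⟨(.ofAdd 1, 1, 1), by simpa [hψ] using zmodHom_ofAdd_intCast g₁ h₁ 1⟩
      · exact ⟨(1, .ofAdd 1, 1), by simpa [hψ] using zmodHom_ofAdd_intCast g₂ h₂ 1⟩
      · exact ⟨(1, 1, .ofAdd 1), by simpa [hψ] using zmodHom_ofAdd_intCast g₃ h₃ 1⟩
  have hbij : Function.Bijective ψ.rangeRestrict :=
    ψ.rangeRestrict_surjective.bijective_of_nat_card_le (by simpa [hrange, mul_assoc] using hcard)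
  exact ⟨((MulEquiv.ofBijective _ hbij).trans (MulEquiv.subgroupCongr hrange)).symm⟩

end CommutingTriple

namespace RedeiGroup

variable {r s : ℕ}

def lift {G : Type*} [Group G] (a b : G) (ha : a ^ 2 ^ r = 1) (hb : b ^ 2 ^ s = 1)
    (hab : ⁅a, b⁆ ^ 2 = 1) (ha' : ⁅a, ⁅a, b⁆⁆ = 1) (hb' : ⁅b, ⁅a, b⁆⁆ = 1) :
    RedeiGroup r s →* G :=
  PresentedGroup.toGroup (f := ![a, b]) <| by
    rintro _ (rfl | rfl | rfl | rfl | rfl) <;>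
      simp [gx, gy, map_commutatorElement, ha, hb, hab, ha', hb']

section Lift
variable {G : Type*} [Group G] {a b : G} (ha : a ^ 2 ^ r = 1) (hb : b ^ 2 ^ s = 1)
    (hab : ⁅a, b⁆ ^ 2 = 1) (ha' : ⁅a, ⁅a, b⁆⁆ = 1) (hb' : ⁅b, ⁅a, b⁆⁆ = 1)

@[simp] theorem lift_Dx : lift a b ha hb hab ha' hb' (Dx r s) = a := PresentedGroup.toGroup.of _
@[simp] theorem lift_Dy : lift a b ha hb hab ha' hb' (Dy r s) = b := PresentedGroup.toGroup.of _
@[simp] theorem lift_Dz : lift a b ha hb hab ha' hb' (Dz r s) = ⁅a, b⁆ := by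
  simp [Dz, map_commutatorElement]

end Lift

theorem Dx_pow_two_pow : Dx r s ^ 2 ^ r = 1 := by
  have := PresentedGroup.one_of_mem (rels := redeiRels r s) (x := gx ^ 2 ^ r) (by simp [redeiRels])
  rwa [map_pow] at this

theorem Dy_pow_two_pow : Dy r s ^ 2 ^ s = 1 := by
  have := PresentedGroup.one_of_mem (rels := redeiRels r s) (x := gy ^ 2 ^ s) (by simp [redeiRels])
  rwa [map_pow] at this

theorem Dz_sq : Dz r s ^ 2 = 1 := by
  have := PresentedGroup.one_of_mem (rels := redeiRels r s) (x := ⁅gx, gy⁆ ^ 2)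
    (by simp [redeiRels])
  rwa [map_pow, map_commutatorElement] at this

theorem commute_Dx_Dz : Commute (Dx r s) (Dz r s) := by
  have := PresentedGroup.one_of_mem (rels := redeiRels r s) (x := ⁅gx, ⁅gx, gy⁆⁆)
    (by simp [redeiRels])
  rwa [map_commutatorElement, map_commutatorElement, commutatorElement_eq_one_iff_commute] at this

theorem commute_Dy_Dz : Commute (Dy r s) (Dz r s) := by
  have := PresentedGroup.one_of_mem (rels := redeiRels r s) (x := ⁅gy, ⁅gx, gy⁆⁆)
    (by simp [redeiRels])
  rwa [map_commutatorElement, map_commutatorElement, commutatorElement_eq_one_iff_commute] at this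

theorem closure_Dx_Dy : Subgroup.closure {Dx r s, Dy r s} = ⊤ :=
  eq_top_iff.mpr fun g _ => PresentedGroup.generated_by _ _ (fun i => by
    fin_cases i
    · exact Subgroup.subset_closure (Set.mem_insert _ _)
    · exact Subgroup.subset_closure (Set.mem_insert_of_mem _ rfl)) g

theorem commute_Dz (g : RedeiGroup r s) : Commute g (Dz r s) := by
  have hle : Subgroup.closure {Dx r s, Dy r s} ≤ Subgroup.centralizer {Dz r s} := by
    rw [Subgroup.closure_le, Set.insert_subset_iff, Set.singleton_subset_iff]
    exact ⟨Subgroup.mem_centralizer_singleton_iff.mpr commute_Dx_Dz.eq,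
      Subgroup.mem_centralizer_singleton_iff.mpr commute_Dy_Dz.eq⟩
  rw [closure_Dx_Dy] at hle
  exact Subgroup.mem_centralizer_singleton_iff.mp (hle (Subgroup.mem_top g))

theorem semiconjBy_Dy_Dx : SemiconjBy (Dy r s) (Dx r s) (Dx r s * Dz r s) := by
  have hinv : (Dz r s)⁻¹ = Dz r s := inv_eq_of_mul_eq_one_right (by rw [← sq, Dz_sq])
  calc Dy r s * Dx r s = (Dz r s)⁻¹ * (Dx r s * Dy r s) := by
        rw [Dz, commutatorElement_def]; group
    _ = Dx r s * Dz r s * Dy r s := by rw [hinv, ← mul_assoc, (commute_Dz _).eq]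

theorem exists_eq_normal_form (g : RedeiGroup r s) :
    ∃ a < 2 ^ r, ∃ b < 2 ^ s, ∃ c < 2, g = Dx r s ^ a * Dy r s ^ b * Dz r s ^ c := by
  obtain ⟨a, b, c, rfl⟩ := exists_eq_pow_mul_pow_mul_pow_of_mem_closure semiconjBy_Dy_Dx
    (commute_Dz _) (commute_Dz _)
    (isOfFinOrder_iff_pow_eq_one.mpr ⟨_, by positivity, Dx_pow_two_pow⟩)
    (isOfFinOrder_iff_pow_eq_one.mpr ⟨_, by positivity, Dy_pow_two_pow⟩)
    (closure_Dx_Dy ▸ Subgroup.mem_top g)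
  exact ⟨_, Nat.mod_lt a (by positivity), _, Nat.mod_lt b (by positivity), _,
    Nat.mod_lt c (by positivity), by rw [← pow_eq_pow_mod a Dx_pow_two_pow,
      ← pow_eq_pow_mod b Dy_pow_two_pow, ← pow_eq_pow_mod c Dz_sq]⟩

theorem surjective_normal_form : Function.Surjective
    fun abc : Fin (2 ^ r) × Fin (2 ^ s) × Fin 2 =>
      Dx r s ^ (abc.1 : ℕ) * Dy r s ^ (abc.2.1 : ℕ) * Dz r s ^ (abc.2.2 : ℕ) := by
  intro g
  obtain ⟨a, ha, b, hb, c, hc, rfl⟩ := exists_eq_normal_form g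
  exact ⟨(⟨a, ha⟩, ⟨b, hb⟩, ⟨c, hc⟩), rfl⟩

instance inst_s4 : Finite (RedeiGroup r s) := Finite.of_surjective _ surjective_normal_form

def liftComm {A : Type*} [CommGroup A] (a b : A) (ha : a ^ 2 ^ r = 1) (hb : b ^ 2 ^ s = 1) :
    RedeiGroup r s →* A :=
  have hab : ⁅a, b⁆ = 1 := commutatorElement_eq_one_iff_mul_comm.mpr (mul_comm a b)
  lift a b ha hb (by rw [hab, one_pow]) (by rw [hab, commutatorElement_one_right])
    (by rw [hab, commutatorElement_one_right])

section LiftComm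
variable {A : Type*} [CommGroup A] {a b : A} (ha : a ^ 2 ^ r = 1) (hb : b ^ 2 ^ s = 1)

@[simp] theorem liftComm_Dx : liftComm a b ha hb (Dx r s) = a := by simp [liftComm]
@[simp] theorem liftComm_Dy : liftComm a b ha hb (Dy r s) = b := by simp [liftComm]
@[simp] theorem liftComm_Dz : liftComm a b ha hb (Dz r s) = 1 := by
  rw [liftComm, lift_Dz, commutatorElement_eq_one_iff_mul_comm, mul_comm]

end LiftComm

theorem Dz_ne_one (hr : 2 ≤ r) (hs : 1 ≤ s) : Dz r s ≠ 1 := by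
  have hx : (DihedralGroup.r 1 : DihedralGroup 4) ^ 2 ^ r = 1 := by
    rw [DihedralGroup.r_one_pow, ← DihedralGroup.r_zero, (ZMod.natCast_eq_zero_iff _ _).mpr]
    exact (pow_dvd_pow 2 hr : 2 ^ 2 ∣ 2 ^ r)
  have hy : (DihedralGroup.sr 0 : DihedralGroup 4) ^ 2 ^ s = 1 := by
    obtain ⟨k, rfl⟩ := Nat.exists_eq_add_of_le' hs
    rw [pow_succ', pow_mul, (by decide : (DihedralGroup.sr 0 : DihedralGroup 4) ^ 2 = 1), one_pow]
  intro h
  have := congrArg (lift _ _ hx hy (by decide) (by decide) (by decide)) h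
  rw [lift_Dz, map_one] at this
  exact absurd this (by decide)

theorem card_eq (hr : 2 ≤ r) (hs : 1 ≤ s) : Nat.card (RedeiGroup r s) = 2 ^ (r + s + 1) := by
  refine le_antisymm card_le ?_
  let α : RedeiGroup r s →* Multiplicative (ZMod (2 ^ r)) × Multiplicative (ZMod (2 ^ s)) :=
    liftComm (.ofAdd 1, 1) (1, .ofAdd 1) (by simp [← ofAdd_nsmul]) (by simp [← ofAdd_nsmul])
  have hα : Function.Surjective α := by
    rintro ⟨a, b⟩
    refine ⟨Dx r s ^ (Multiplicative.toAdd a).val * Dy r s ^ (Multiplicative.toAdd b).val, ?_⟩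
    simp [α, ← ofAdd_nsmul]
  have hker : α.ker ≠ ⊥ := fun h => Dz_ne_one hr hs <| by
    have : Dz r s ∈ α.ker := by simp [α]
    rwa [h, Subgroup.mem_bot] at this
  calc 2 ^ (r + s + 1)
      = 2 * Nat.card (Multiplicative (ZMod (2 ^ r)) × Multiplicative (ZMod (2 ^ s))) := by
        simp [pow_succ, pow_add, mul_comm]
    _ ≤ Nat.card α.ker * α.ker.index := by
        rw [Subgroup.index_ker, MonoidHom.range_eq_top.mpr hα, Subgroup.card_top]
        exact Nat.mul_le_mul_right _ ((Subgroup.one_lt_card_iff_ne_bot _).mpr hker)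
    _ = _ := α.ker.card_mul_index

theorem isPGroup (hr : 2 ≤ r) (hs : 1 ≤ s) : IsPGroup 2 (RedeiGroup r s) :=
  IsPGroup.of_card (card_eq hr hs)

theorem semiconjBy_Dy_pow_Dx_pow (a b : ℕ) :
    SemiconjBy (Dy r s ^ b) (Dx r s ^ a) (Dx r s ^ a * Dz r s ^ (a * b)) :=
  semiconjBy_Dy_Dx.pow_pow_of_mul_right (commute_Dz _) (commute_Dz _) a b

theorem commute_Dx_Dy_sq : Commute (Dx r s) (Dy r s ^ 2) := by
  have := semiconjBy_Dy_pow_Dx_pow (r := r) (s := s) 1 2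
  rw [pow_one, one_mul, Dz_sq, mul_one] at this
  exact this.symm

theorem commute_Dx_sq_Dy : Commute (Dx r s ^ 2) (Dy r s) := by
  have := semiconjBy_Dy_pow_Dx_pow (r := r) (s := s) 2 1
  rw [pow_one, mul_one, Dz_sq, mul_one] at this
  exact this.symm

theorem Dx_mul_Dy_sq : (Dx r s * Dy r s) ^ 2 = Dx r s ^ 2 * Dy r s ^ 2 * Dz r s := by
  rw [sq, mul_assoc, ← mul_assoc (Dy r s), semiconjBy_Dy_Dx.eq, sq, sq]
  simp only [mul_assoc]
  rw [← (commute_Dz (Dy r s * Dy r s)).eq, mul_assoc]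

def parity (hr : r ≠ 0) (hs : s ≠ 0) (u v : ZMod 2) : RedeiGroup r s →* Multiplicative (ZMod 2) :=
  liftComm (.ofAdd u) (.ofAdd v) (by simp [← ofAdd_nsmul, hr, CharTwo.two_eq_zero])
    (by simp [← ofAdd_nsmul, hs, CharTwo.two_eq_zero])

theorem parity_normal_form (hr : r ≠ 0) (hs : s ≠ 0) (u v : ZMod 2) (a b c : ℕ) :
    parity hr hs u v (Dx r s ^ a * Dy r s ^ b * Dz r s ^ c) = .ofAdd (a * u + b * v) := by
  simp [parity, ← ofAdd_nsmul, ← ofAdd_add]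

variable (r s) in
def K₁ : Subgroup (RedeiGroup r s) := Subgroup.closure {Dx r s ^ 2, Dy r s, Dz r s}

variable (r s) in
def K₂ : Subgroup (RedeiGroup r s) := Subgroup.closure {Dx r s, Dy r s ^ 2, Dz r s}

variable (r s) in
def K₃ : Subgroup (RedeiGroup r s) := Subgroup.closure {Dx r s * Dy r s, Dx r s ^ 2, Dz r s}

theorem Dy_sq_mem_K₃ : Dy r s ^ 2 ∈ K₃ r s := by
  have hXY : (Dx r s * Dy r s) ^ 2 ∈ K₃ r s := pow_mem (Subgroup.subset_closure (by simp)) 2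
  have hX : Dx r s ^ 2 ∈ K₃ r s := Subgroup.subset_closure (by simp)
  have hZ : Dz r s ∈ K₃ r s := Subgroup.subset_closure (by simp)
  have : Dy r s ^ 2 = (Dx r s ^ 2)⁻¹ * (Dx r s * Dy r s) ^ 2 * (Dz r s)⁻¹ := by
    rw [Dx_mul_Dy_sq]; group
  rw [this]
  exact mul_mem (mul_mem (inv_mem hX) hXY) (inv_mem hZ)

theorem K₁_eq_ker (hr : r ≠ 0) (hs : s ≠ 0) : K₁ r s = (parity hr hs 1 0).ker := by
  refine le_antisymm ((Subgroup.closure_le _).mpr ?_) fun g hg => ?_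
  · simp [Set.insert_subset_iff, parity, ← ofAdd_nsmul, CharTwo.two_eq_zero]
  · obtain ⟨a, -, b, -, c, -, rfl⟩ := exists_eq_normal_form g
    rw [MonoidHom.mem_ker, parity_normal_form] at hg
    have ha : Even a := ZMod.natCast_eq_zero_iff_even.mp (by simpa using hg)
    exact mul_mem (mul_mem (Subgroup.pow_mem_of_even (Subgroup.subset_closure (by simp)) ha)
      (pow_mem (Subgroup.subset_closure (by simp)) b)) (pow_mem (Subgroup.subset_closure (by simp)) c)

theorem K₂_eq_ker (hr : r ≠ 0) (hs : s ≠ 0) : K₂ r s = (parity hr hs 0 1).ker := by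
  refine le_antisymm ((Subgroup.closure_le _).mpr ?_) fun g hg => ?_
  · simp [Set.insert_subset_iff, parity, ← ofAdd_nsmul, CharTwo.two_eq_zero]
  · obtain ⟨a, -, b, -, c, -, rfl⟩ := exists_eq_normal_form g
    rw [MonoidHom.mem_ker, parity_normal_form] at hg
    have hb : Even b := ZMod.natCast_eq_zero_iff_even.mp (by simpa using hg)
    exact mul_mem (mul_mem (pow_mem (Subgroup.subset_closure (by simp)) a)
      (Subgroup.pow_mem_of_even (Subgroup.subset_closure (by simp)) hb))
      (pow_mem (Subgroup.subset_closure (by simp)) c)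

theorem K₃_eq_ker (hr : r ≠ 0) (hs : s ≠ 0) : K₃ r s = (parity hr hs 1 1).ker := by
  refine le_antisymm ((Subgroup.closure_le _).mpr ?_) fun g hg => ?_
  · simp [Set.insert_subset_iff, parity, ← ofAdd_nsmul, ← ofAdd_add, CharTwo.two_eq_zero,
      CharTwo.add_self_eq_zero]
  · obtain ⟨a, -, b, -, c, -, rfl⟩ := exists_eq_normal_form g
    rw [MonoidHom.mem_ker, parity_normal_form] at hg
    have hab : Even a ↔ Even b :=
      Nat.even_add.mp (ZMod.natCast_eq_zero_iff_even.mp (by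
        rw [mul_one, mul_one, ofAdd_eq_one] at hg
        exact_mod_cast hg))
    have hX : Dx r s ^ 2 ∈ K₃ r s := Subgroup.subset_closure (by simp)
    have hZ : Dz r s ^ c ∈ K₃ r s := pow_mem (Subgroup.subset_closure (by simp)) c
    rcases Nat.even_or_odd a with ha | ha
    · exact mul_mem (mul_mem (Subgroup.pow_mem_of_even hX ha)
        (Subgroup.pow_mem_of_even Dy_sq_mem_K₃ (hab.mp ha))) hZ
    · obtain ⟨k, rfl⟩ := ha
      obtain ⟨l, rfl⟩ := Nat.not_even_iff_odd.mp (hab.not.mp (Nat.not_even_iff_odd.mpr ⟨k, rfl⟩))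
      have hXY : Dx r s * Dy r s ∈ K₃ r s := Subgroup.subset_closure (by simp)
      rw [pow_succ, pow_succ', mul_assoc (Dx r s ^ (2 * k)), ← mul_assoc (Dx r s)]
      exact mul_mem (mul_mem (Subgroup.pow_mem_of_even hX (even_two_mul k))
        (mul_mem hXY (Subgroup.pow_mem_of_even Dy_sq_mem_K₃ (even_two_mul l)))) hZ

theorem index_K₁ (hr : r ≠ 0) (hs : s ≠ 0) : (K₁ r s).index = 2 := by
  rw [K₁_eq_ker hr hs]
  exact MonoidHom.index_ker_eq_two (g := Dx r s) (by simp [parity])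

theorem index_K₂ (hr : r ≠ 0) (hs : s ≠ 0) : (K₂ r s).index = 2 := by
  rw [K₂_eq_ker hr hs]
  exact MonoidHom.index_ker_eq_two (g := Dy r s) (by simp [parity])

theorem index_K₃ (hr : r ≠ 0) (hs : s ≠ 0) : (K₃ r s).index = 2 := by
  rw [K₃_eq_ker hr hs]
  exact MonoidHom.index_ker_eq_two (g := Dx r s) (by simp [parity])

theorem card_of_index_eq_two (hr : 2 ≤ r) (hs : 1 ≤ s) {H : Subgroup (RedeiGroup r s)}
    (h : H.index = 2) : Nat.card H = 2 ^ (r + s) := by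
  have := H.card_mul_index
  rw [h, card_eq hr hs, pow_succ] at this
  exact Nat.eq_of_mul_eq_mul_right two_pos this

theorem isCoatom_iff (hr : 2 ≤ r) (hs : 1 ≤ s) (M : Subgroup (RedeiGroup r s)) :
    IsCoatom M ↔ M = K₁ r s ∨ M = K₂ r s ∨ M = K₃ r s := by
  have hr0 : r ≠ 0 := by omega
  have hs0 : s ≠ 0 := by omega
  have hK₁ := Subgroup.isCoatom_of_index_prime (index_K₁ hr0 hs0 ▸ Nat.prime_two)
  have hK₂ := Subgroup.isCoatom_of_index_prime (index_K₂ hr0 hs0 ▸ Nat.prime_two)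
  have hK₃ := Subgroup.isCoatom_of_index_prime (index_K₃ hr0 hs0 ▸ Nat.prime_two)
  refine ⟨fun hM => ?_, by rintro (rfl | rfl | rfl) <;> assumption⟩
  have h2 : M.index = 2 := (isPGroup hr hs).index_eq_of_isCoatom hM
  have hX : Dx r s ^ 2 ∈ M := Subgroup.sq_mem_of_index_two h2 _
  have hY : Dy r s ^ 2 ∈ M := Subgroup.sq_mem_of_index_two h2 _
  have hZ : Dz r s ∈ M := Subgroup.commutatorElement_mem_of_index_two h2 _ _
  have hle : ∀ {K : Subgroup (RedeiGroup r s)}, IsCoatom K → K ≤ M → M = K :=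
    fun hK hKM => (hK.le_iff.mp hKM).resolve_left hM.1
  by_cases hx : Dx r s ∈ M <;> by_cases hy : Dy r s ∈ M
  · refine absurd (eq_top_iff.mpr ?_) hM.1
    rw [← closure_Dx_Dy, Subgroup.closure_le, Set.insert_subset_iff, Set.singleton_subset_iff]
    exact ⟨hx, hy⟩
  · refine Or.inr (Or.inl (hle hK₂ ?_))
    simp [K₂, Subgroup.closure_le, Set.insert_subset_iff, *]
  · refine Or.inl (hle hK₁ ?_)
    simp [K₁, Subgroup.closure_le, Set.insert_subset_iff, *]
  · have hxy : Dx r s * Dy r s ∈ M := (Subgroup.mul_mem_iff_of_index_two h2).mpr (iff_of_false hx hy)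
    refine Or.inr (Or.inr (hle hK₃ ?_))
    simp [K₃, Subgroup.closure_le, Set.insert_subset_iff, *]

theorem K₃_eq_closure : K₃ r s = Subgroup.closure {Dx r s * Dy r s, Dy r s ^ 2, Dz r s} := by
  have hXY : Dx r s * Dy r s ∈ Subgroup.closure {Dx r s * Dy r s, Dy r s ^ 2, Dz r s} :=
    Subgroup.subset_closure (by simp)
  have hY : Dy r s ^ 2 ∈ Subgroup.closure {Dx r s * Dy r s, Dy r s ^ 2, Dz r s} :=
    Subgroup.subset_closure (by simp)
  have hZ : Dz r s ∈ Subgroup.closure {Dx r s * Dy r s, Dy r s ^ 2, Dz r s} :=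
    Subgroup.subset_closure (by simp)
  have hX : Dx r s ^ 2 = (Dx r s * Dy r s) ^ 2 * (Dz r s)⁻¹ * (Dy r s ^ 2)⁻¹ := by
    rw [Dx_mul_Dy_sq]; group
  apply le_antisymm
  · rw [K₃, Subgroup.closure_le, Set.insert_subset_iff, Set.insert_subset_iff,
      Set.singleton_subset_iff, hX]
    exact ⟨hXY, mul_mem (mul_mem (pow_mem hXY 2) (inv_mem hZ)) (inv_mem hY), hZ⟩
  · rw [Subgroup.closure_le, Set.insert_subset_iff, Set.insert_subset_iff,
      Set.singleton_subset_iff]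
    exact ⟨Subgroup.subset_closure (by simp), Dy_sq_mem_K₃, Subgroup.subset_closure (by simp)⟩

theorem Dx_mul_Dy_pow_two_pow (hr : 2 ≤ r) (hrs : s ≤ r) : (Dx r s * Dy r s) ^ 2 ^ r = 1 := by
  have h2r : 2 ^ r = 2 * 2 ^ (r - 1) := by rw [← pow_succ', Nat.sub_add_cancel (by omega)]
  have hpow : ∀ {g : RedeiGroup r s} {m n : ℕ}, g ^ m = 1 → m ∣ n → g ^ n = 1 := fun h hmn =>
    orderOf_dvd_iff_pow_eq_one.mp ((orderOf_dvd_of_pow_eq_one h).trans hmn)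
  rw [h2r, pow_mul, Dx_mul_Dy_sq, (commute_Dz _).mul_pow, (commute_Dx_sq_Dy.pow_right 2).mul_pow,
    ← pow_mul, ← pow_mul, ← h2r, Dx_pow_two_pow, hpow Dy_pow_two_pow (pow_dvd_pow 2 hrs),
    one_mul, one_mul]
  exact hpow Dz_sq (dvd_pow_self 2 (by omega))

theorem nonempty_mulEquiv_K₁ (hr : 2 ≤ r) (hs : 1 ≤ s) : Nonempty (K₁ r s ≃*
    Multiplicative (ZMod (2 ^ (r - 1))) × Multiplicative (ZMod (2 ^ s)) × Multiplicative (ZMod 2)) :=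
  nonempty_mulEquiv_closure_of_commute
    (by rw [← pow_mul, ← pow_succ', Nat.sub_add_cancel (by omega : 1 ≤ r), Dx_pow_two_pow])
    Dy_pow_two_pow Dz_sq commute_Dx_sq_Dy (commute_Dz _) (commute_Dz _) <| by
      rw [← K₁, card_of_index_eq_two hr hs (index_K₁ (by omega) (by omega)), ← pow_add, ← pow_succ]
      exact Nat.pow_le_pow_right two_pos (by omega)

theorem nonempty_mulEquiv_K₂ (hr : 2 ≤ r) (hs : 1 ≤ s) : Nonempty (K₂ r s ≃*
    Multiplicative (ZMod (2 ^ r)) × Multiplicative (ZMod (2 ^ (s - 1))) × Multiplicative (ZMod 2)) :=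
  nonempty_mulEquiv_closure_of_commute Dx_pow_two_pow
    (by rw [← pow_mul, ← pow_succ', Nat.sub_add_cancel hs, Dy_pow_two_pow])
    Dz_sq commute_Dx_Dy_sq (commute_Dz _) (commute_Dz _) <| by
      rw [← K₂, card_of_index_eq_two hr hs (index_K₂ (by omega) (by omega)), ← pow_add, ← pow_succ]
      exact Nat.pow_le_pow_right two_pos (by omega)

theorem nonempty_mulEquiv_K₃ (hr : 2 ≤ r) (hs : 1 ≤ s) (hrs : s ≤ r) : Nonempty (K₃ r s ≃*
    Multiplicative (ZMod (2 ^ r)) × Multiplicative (ZMod (2 ^ (s - 1))) × Multiplicative (ZMod 2)) := by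
  rw [K₃_eq_closure]
  refine nonempty_mulEquiv_closure_of_commute (Dx_mul_Dy_pow_two_pow hr hrs)
    (by rw [← pow_mul, ← pow_succ', Nat.sub_add_cancel hs, Dy_pow_two_pow])
    Dz_sq (commute_Dx_Dy_sq.mul_left (Commute.self_pow _ 2)) (commute_Dz _) (commute_Dz _) ?_
  rw [← K₃_eq_closure, card_of_index_eq_two hr hs (index_K₃ (by omega) (by omega)), ← pow_add,
    ← pow_succ]
  exact Nat.pow_le_pow_right two_pos (by omega)

end RedeiGroup

theorem stmt4 (r s : ℕ) (hr : 2 ≤ r) (hs : 1 ≤ s) (hrs : s ≤ r) :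
    (∀ M : Subgroup (RedeiGroup r s), IsCoatom M ↔
      (M = Subgroup.closure {(Dx r s) ^ 2, Dy r s, Dz r s} ∨
       M = Subgroup.closure {Dx r s, (Dy r s) ^ 2, Dz r s} ∨
       M = Subgroup.closure {Dx r s * Dy r s, (Dx r s) ^ 2, Dz r s})) ∧
    Nonempty ((Subgroup.closure {(Dx r s) ^ 2, Dy r s, Dz r s}) ≃*
      Multiplicative (ZMod (2 ^ (r - 1))) × Multiplicative (ZMod (2 ^ s)) ×
        Multiplicative (ZMod 2)) ∧
    Nonempty ((Subgroup.closure {Dx r s, (Dy r s) ^ 2, Dz r s}) ≃*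
      Multiplicative (ZMod (2 ^ r)) × Multiplicative (ZMod (2 ^ (s - 1))) ×
        Multiplicative (ZMod 2)) ∧
    Nonempty ((Subgroup.closure {Dx r s * Dy r s, (Dx r s) ^ 2, Dz r s}) ≃*
      Multiplicative (ZMod (2 ^ r)) × Multiplicative (ZMod (2 ^ (s - 1))) ×
        Multiplicative (ZMod 2)) :=
  ⟨RedeiGroup.isCoatom_iff hr hs, RedeiGroup.nonempty_mulEquiv_K₁ hr hs,
    RedeiGroup.nonempty_mulEquiv_K₂ hr hs, RedeiGroup.nonempty_mulEquiv_K₃ hr hs hrs⟩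
end

section
/- Let P = C_{2^(n₁)} × ... × C_{2^(n_k)} be a finite direct product of cyclic 2-groups with n₁,...,n_k ≥ 1. Then Aut(P) is a 2-group if and only if the exponents n₁,...,n_k are pairwise distinct. -/
/-!
Let `evenAbove n t` be the subgroup of `P = ∀ i, ZMod (2 ^ n i)` of elements whose coordinates of
exponent `n i > t` are even. Every endomorphism preserves it: split an element into its
coordinates of exponent `> t`, which are even, and the rest, which is killed by `2 ^ t`. If the
exponents are distinct, every automorphism `φ` has odd diagonal entries `φ (eᵢ) i`, so `φ - 1`
maps `evenAbove n t` into `evenAbove n (t - 1)`. Hence `(φ - 1) ^ T` maps `P` into `2 • P`,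
`φ - 1` is nilpotent, and since `2` is nilpotent in `End P` the binomial theorem gives
`φ ^ 2 ^ M = 1`. If `n i = n j` with `i ≠ j`, the matrix `!![0, -1; 1, -1]` on the coordinates
`i, j` is an automorphism of order `3`.
-/

open Function

theorem Pi.even_iff {ι : Type*} {G : ι → Type*} [∀ i, Add (G i)] {a : ∀ i, G i} :
    Even a ↔ ∀ i, Even (a i) :=
  ⟨fun ⟨r, hr⟩ i => ⟨r i, congrFun hr i⟩,
    fun h => ⟨fun i => (h i).choose, funext fun i => (h i).choose_spec⟩⟩

namespace ZMod

theorem two_pow_nsmul_eq_zero {e t : ℕ} (het : e ≤ t) (x : ZMod (2 ^ e)) : 2 ^ t • x = 0 := by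
  rw [nsmul_eq_mul, (natCast_eq_zero_iff _ _).mpr (pow_dvd_pow 2 het), zero_mul]

theorem even_of_two_pow_nsmul_eq_zero {e t : ℕ} (hte : t < e) {x : ZMod (2 ^ e)}
    (hx : 2 ^ t • x = 0) : Even x := by
  rw [← natCast_zmod_val x] at hx ⊢
  rw [nsmul_eq_mul, ← Nat.cast_mul, natCast_eq_zero_iff] at hx
  obtain ⟨m, hm⟩ : 2 ∣ x.val :=
    Nat.dvd_of_mul_dvd_mul_left (pow_pos two_pos t) (pow_succ 2 t ▸ (pow_dvd_pow 2 hte).trans hx)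
  exact ⟨m, by rw [hm]; push_cast; ring⟩

theorem not_even_one {e : ℕ} (he : e ≠ 0) : ¬Even (1 : ZMod (2 ^ e)) := by
  rintro ⟨r, hr⟩
  have := congrArg (castHom (dvd_pow_self 2 he) (ZMod 2)) hr
  rw [map_one, map_add, CharTwo.add_self_eq_zero] at this
  exact one_ne_zero this

theorem even_sub_one_of_not_even {e : ℕ} {y : ZMod (2 ^ e)} (hy : ¬Even y) : Even (y - 1) := by
  rw [← natCast_zmod_val y] at hy ⊢
  obtain ⟨m, hm⟩ : Odd y.val := Nat.not_even_iff_odd.mp fun h => hy h.natCast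
  exact ⟨m, by rw [hm]; push_cast; ring⟩

end ZMod

theorem AddMonoid.End.exists_eq_two_pow_nsmul_of_forall_even {A : Type*} [AddCommMonoid A]
    {f : AddMonoid.End A} (hf : ∀ a, Even (f a)) (m : ℕ) (a : A) :
    ∃ d, (f ^ m) a = 2 ^ m • d := by
  induction m generalizing a with
  | zero => exact ⟨a, by simp⟩
  | succ m ih =>
    obtain ⟨d, hd⟩ := hf a
    obtain ⟨d', hd'⟩ := ih d
    refine ⟨d', ?_⟩
    rw [pow_succ, AddMonoid.End.coe_mul, comp_apply, hd, map_add, hd', ← two_nsmul, ← mul_nsmul',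
      ← pow_succ']

theorem IsNilpotent.exists_one_add_pow_prime_pow_eq_one {R : Type*} [Ring R] {p : ℕ}
    (hp : p.Prime) (hpR : IsNilpotent (p : R)) {x : R} (hx : IsNilpotent x) :
    ∃ M, (1 + x) ^ p ^ M = 1 := by
  obtain ⟨T, hT⟩ := hpR
  obtain ⟨N, hN⟩ := hx
  refine ⟨T + N, ?_⟩
  rw [add_comm, (Commute.one_right x).add_pow, Finset.sum_eq_single 0 _ (by simp)]
  · simp
  intro m hm hm0
  rcases le_or_gt N m with hNm | hmN
  · rw [pow_eq_zero_of_le hNm hN, zero_mul, zero_mul]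
  obtain ⟨r, hr⟩ : p ^ T ∣ (p ^ (T + N)).choose m := by
    refine (pow_dvd_pow p ?_).trans (Nat.ordProj_dvd _ p)
    rw [Nat.factorization_choose_prime_pow hp (Nat.lt_succ_iff.mp (Finset.mem_range.mp hm)) hm0]
    have := Nat.factorization_lt p hm0
    omega
  rw [hr, Nat.cast_mul, Nat.cast_pow, hT, zero_mul, mul_zero]

def MulAut.toAddMonoidEnd (A : Type*) [AddMonoid A] :
    MulAut (Multiplicative A) →* AddMonoid.End A where
  toFun σ := AddMonoidHom.toMultiplicative.symm σ.toMonoidHom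
  map_one' := rfl
  map_mul' _ _ := rfl

theorem MulAut.toAddMonoidEnd_injective (A : Type*) [AddMonoid A] :
    Injective (MulAut.toAddMonoidEnd A) :=
  fun _ _ h => MulEquiv.ext fun a => DFunLike.congr_fun h a.toAdd

section Filtration

variable {ι : Type*} {n : ι → ℕ}

variable (n) in
def evenAbove (t : ℕ) : AddSubgroup (∀ i, ZMod (2 ^ n i)) where
  carrier := {a | ∀ i, t < n i → Even (a i)}
  add_mem' ha hb i hi := (ha i hi).add (hb i hi)
  zero_mem' _ _ := Even.zero
  neg_mem' ha i hi := (ha i hi).neg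

theorem mem_evenAbove_of_le {T : ℕ} (hT : ∀ i, n i ≤ T) (a : ∀ i, ZMod (2 ^ n i)) :
    a ∈ evenAbove n T :=
  fun i hi => absurd (hT i) (by omega)

theorem even_of_mem_evenAbove_zero {a : ∀ i, ZMod (2 ^ n i)} (ha : a ∈ evenAbove n 0) :
    Even a := by
  refine Pi.even_iff.mpr fun i => ?_
  rcases Nat.eq_zero_or_pos (n i) with h | h
  · have : Subsingleton (ZMod (2 ^ n i)) := ZMod.subsingleton_iff.mpr (by simp [h])
    exact ⟨0, Subsingleton.elim _ _⟩
  · exact ha i h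

theorem map_mem_evenAbove {F : Type*} [FunLike F (∀ i, ZMod (2 ^ n i)) (∀ i, ZMod (2 ^ n i))]
    [AddMonoidHomClass F (∀ i, ZMod (2 ^ n i)) (∀ i, ZMod (2 ^ n i))] (f : F) {t : ℕ}
    {a : ∀ i, ZMod (2 ^ n i)} (ha : a ∈ evenAbove n t) : f a ∈ evenAbove n t := by
  classical
  set b : ∀ i, ZMod (2 ^ n i) := fun i => if t < n i then a i else 0
  have hb : Even b := Pi.even_iff.mpr fun i => by
    by_cases hi : t < n i
    · simpa [b, hi] using ha i hi
    · simp [b, hi]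
  have hab : 2 ^ t • (a - b) = 0 := by
    funext i
    by_cases hi : t < n i
    · simp [b, hi]
    · simpa [b, hi] using ZMod.two_pow_nsmul_eq_zero (by omega) (a i)
  intro i hi
  rw [← add_sub_cancel b a, map_add]
  refine (Pi.even_iff.mp (hb.map f) i).add (ZMod.even_of_two_pow_nsmul_eq_zero hi ?_)
  rw [← Pi.smul_apply, ← map_nsmul, hab, map_zero, Pi.zero_apply]

theorem mem_evenAbove_pred (hinj : Injective n) {i : ι} {a : ∀ i, ZMod (2 ^ n i)}
    (ha : a ∈ evenAbove n (n i)) (hai : Even (a i)) : a ∈ evenAbove n (n i - 1) := by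
  intro l hl
  rcases eq_or_ne l i with rfl | hli
  · exact hai
  · exact ha l (lt_of_le_of_ne (by omega) fun h => hli (hinj h.symm))

variable [DecidableEq ι]

theorem single_mem_evenAbove (i : ι) : Pi.single i 1 ∈ evenAbove n (n i) := by
  intro l hl
  rw [Pi.single_eq_of_ne (by rintro rfl; omega)]
  exact Even.zero

theorem update_zero_mem_evenAbove_pred (hinj : Injective n) {i : ι} {a : ∀ i, ZMod (2 ^ n i)}
    (ha : a ∈ evenAbove n (n i)) : update a i 0 ∈ evenAbove n (n i - 1) := by
  refine mem_evenAbove_pred hinj (fun l hl => ?_) (by simp)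
  rcases eq_or_ne l i with rfl | hli
  · simp
  · simpa [hli] using ha l hl

theorem eq_update_add_val_nsmul_single (a : ∀ i, ZMod (2 ^ n i)) (i : ι) :
    a = update a i 0 + (a i).val • Pi.single i 1 := by
  rw [Pi.update_eq_sub_add_single, Pi.single_zero, add_zero, ← Pi.single_nsmul, nsmul_one,
    ZMod.natCast_zmod_val, sub_add_cancel]

end Filtration

section Unipotent

variable {ι : Type*} {n : ι → ℕ}

theorem not_even_apply_single [DecidableEq ι] (hinj : Injective n)
    (φ : (∀ i, ZMod (2 ^ n i)) ≃+ ∀ i, ZMod (2 ^ n i)) {i : ι} (hi : n i ≠ 0) :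
    ¬Even (φ (Pi.single i 1) i) := by
  intro heven
  set c := φ.symm (Pi.single i 1)
  have hc : update c i 0 ∈ evenAbove n (n i - 1) :=
    update_zero_mem_evenAbove_pred hinj (map_mem_evenAbove φ.symm (single_mem_evenAbove i))
  have key : Pi.single i 1 = φ (update c i 0) + (c i).val • φ (Pi.single i 1) := by
    rw [← map_nsmul, ← map_add, ← eq_update_add_val_nsmul_single, φ.apply_symm_apply]
  have := congrFun key i
  rw [Pi.single_eq_same, Pi.add_apply, Pi.smul_apply] at this
  exact ZMod.not_even_one hi
    (this ▸ (map_mem_evenAbove φ hc i (by omega)).add (heven.nsmul_right _))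

theorem sub_mem_evenAbove_pred (hinj : Injective n)
    (φ : (∀ i, ZMod (2 ^ n i)) ≃+ ∀ i, ZMod (2 ^ n i)) {t : ℕ} {a : ∀ i, ZMod (2 ^ n i)}
    (ha : a ∈ evenAbove n t) : φ a - a ∈ evenAbove n (t - 1) := by
  classical
  intro i hi
  rcases (show t ≤ n i by omega).lt_or_eq with hti | rfl
  · exact sub_mem (map_mem_evenAbove φ ha) ha i hti
  set e : ∀ i, ZMod (2 ^ n i) := Pi.single i 1
  set a' := update a i 0
  have he : φ e - e ∈ evenAbove n (n i - 1) := by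
    refine mem_evenAbove_pred hinj (sub_mem (map_mem_evenAbove φ (single_mem_evenAbove i))
      (single_mem_evenAbove i)) ?_
    simpa [e] using ZMod.even_sub_one_of_not_even (not_even_apply_single hinj φ (by omega))
  have ha' : a' ∈ evenAbove n (n i - 1) := update_zero_mem_evenAbove_pred hinj ha
  have hsplit : φ a - a = (φ a' - a') + (a i).val • (φ e - e) := by
    conv_lhs => rw [eq_update_add_val_nsmul_single a i]
    rw [map_add, map_nsmul, smul_sub]
    abel
  rw [hsplit]
  exact add_mem (sub_mem (map_mem_evenAbove φ ha') ha') (nsmul_mem he _) i hi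

theorem isNilpotent_toAddMonoidEnd_sub_one [Finite ι] (hinj : Injective n)
    (σ : MulAut (Multiplicative (∀ i, ZMod (2 ^ n i)))) :
    IsNilpotent (MulAut.toAddMonoidEnd _ σ - 1) := by
  obtain ⟨T, hT⟩ := Finite.exists_le n
  set φ : (∀ i, ZMod (2 ^ n i)) ≃+ ∀ i, ZMod (2 ^ n i) := AddEquiv.toMultiplicative.symm σ
  set x := MulAut.toAddMonoidEnd _ σ - 1
  have hx : ∀ a, x a = φ a - a := fun _ => rfl
  have hdescend : ∀ j a, (x ^ j) a ∈ evenAbove n (T - j) := by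
    intro j
    induction j with
    | zero => exact mem_evenAbove_of_le hT
    | succ j ih =>
      intro a
      rw [pow_succ', AddMonoid.End.coe_mul, comp_apply, hx, Nat.sub_add_eq]
      exact sub_mem_evenAbove_pred hinj φ (ih a)
  have heven : ∀ a, Even ((x ^ T) a) := fun a =>
    even_of_mem_evenAbove_zero (by simpa using hdescend T a)
  refine ⟨T * T, AddMonoid.End.ext _ fun a => ?_⟩
  obtain ⟨d, hd⟩ := AddMonoid.End.exists_eq_two_pow_nsmul_of_forall_even heven T a
  rw [pow_mul, hd]
  exact funext fun i => ZMod.two_pow_nsmul_eq_zero (hT i) (d i)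

end Unipotent

theorem isPGroup_two_mulAut_of_injective {ι : Type*} [Finite ι] {n : ι → ℕ}
    (hinj : Injective n) : IsPGroup 2 (MulAut (Multiplicative (∀ i, ZMod (2 ^ n i)))) := by
  intro σ
  obtain ⟨T, hT⟩ := Finite.exists_le n
  have h2 : IsNilpotent ((2 : ℕ) : AddMonoid.End (∀ i, ZMod (2 ^ n i))) :=
    ⟨T, AddMonoid.End.ext _ fun a => funext fun i => by
      rw [← Nat.cast_pow, AddMonoid.End.natCast_apply]
      exact ZMod.two_pow_nsmul_eq_zero (hT i) (a i)⟩
  obtain ⟨M, hM⟩ := h2.exists_one_add_pow_prime_pow_eq_one Nat.prime_two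
    (isNilpotent_toAddMonoidEnd_sub_one hinj σ)
  refine ⟨M, MulAut.toAddMonoidEnd_injective _ ?_⟩
  rw [map_pow, map_one]
  simpa using hM

section Rotation

variable {ι : Type*} [DecidableEq ι] {Z : ι → Type*} [∀ i, AddCommGroup (Z i)] {i j : ι}

variable (i j) in
-- on the coordinates `i, j` this is the matrix `!![0, -1; 1, -1]` of order `3`
def rotateCoords (c : Z j ≃+ Z i) : AddMonoid.End (∀ l, Z l) where
  toFun a := update (update a i (-c (a j))) j (c.symm (a i) - a j)
  map_zero' := by simp
  map_add' a b := by
    ext l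
    rcases eq_or_ne l j with rfl | hlj
    · simp; abel
    rcases eq_or_ne l i with rfl | hli
    · simp [hlj]; abel
    · simp [hli, hlj]

variable (c : Z j ≃+ Z i)

theorem rotateCoords_apply (a : ∀ l, Z l) :
    rotateCoords i j c a = update (update a i (-c (a j))) j (c.symm (a i) - a j) :=
  rfl

theorem rotateCoords_apply_left (hij : i ≠ j) (a : ∀ l, Z l) :
    rotateCoords i j c a i = -c (a j) := by
  simp [rotateCoords_apply, hij]

theorem rotateCoords_apply_right (a : ∀ l, Z l) :
    rotateCoords i j c a j = c.symm (a i) - a j := by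
  simp [rotateCoords_apply]

theorem rotateCoords_apply_of_ne {l : ι} (hli : l ≠ i) (hlj : l ≠ j) (a : ∀ l, Z l) :
    rotateCoords i j c a l = a l := by
  simp [rotateCoords_apply, hli, hlj]

theorem rotateCoords_pow_three (hij : i ≠ j) : rotateCoords i j c ^ 3 = 1 := by
  ext a l
  simp only [pow_succ, pow_zero, one_mul, AddMonoid.End.coe_mul, comp_apply]
  rcases eq_or_ne l j with rfl | hlj
  · simp only [rotateCoords_apply_right, rotateCoords_apply_left c hij, map_sub, map_neg,
      AddEquiv.symm_apply_apply]
    abel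
  rcases eq_or_ne l i with rfl | hli
  · simp only [rotateCoords_apply_right, rotateCoords_apply_left c hij, map_sub, map_neg,
      AddEquiv.apply_symm_apply]
    abel
  · simp only [rotateCoords_apply_of_ne c hli hlj, AddMonoid.End.coe_one, id_eq]

theorem rotateCoords_ne_one (hij : i ≠ j) [Nontrivial (Z i)] : rotateCoords i j c ≠ 1 := by
  obtain ⟨x, hx⟩ := exists_ne (0 : Z i)
  intro h
  have := congrFun (DFunLike.congr_fun h (Pi.single i x)) i
  rw [rotateCoords_apply_left c hij, Pi.single_eq_of_ne hij.symm, map_zero, neg_zero,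
    AddMonoid.End.coe_one, id_eq, Pi.single_eq_same] at this
  exact hx this.symm

end Rotation

theorem injective_of_isPGroup_two_mulAut {ι : Type*} {n : ι → ℕ} (hn : ∀ i, 0 < n i)
    (h : IsPGroup 2 (MulAut (Multiplicative (∀ i, ZMod (2 ^ n i))))) : Injective n := by
  classical
  intro i j hij
  by_contra hne
  have : Fact (1 < 2 ^ n i) := ⟨Nat.one_lt_two_pow (hn i).ne'⟩
  set ρ := rotateCoords (Z := fun l => ZMod (2 ^ n l)) i j
    (ZMod.ringEquivCongr (congrArg (2 ^ ·) hij.symm)).toAddEquiv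
  have hρ3 : ρ ^ 3 = 1 := rotateCoords_pow_three _ hne
  have hρ1 : ρ ≠ 1 := rotateCoords_ne_one _ hne
  let σ : MulAut (Multiplicative (∀ i, ZMod (2 ^ n i))) := AddEquiv.toMultiplicative <|
    AddMonoidHom.toAddEquiv ρ (ρ ^ 2) (show ρ ^ 2 * ρ = 1 by rw [← pow_succ, hρ3])
      (show ρ * ρ ^ 2 = 1 by rw [← pow_succ', hρ3])
  have hσ : MulAut.toAddMonoidEnd _ σ = ρ := rfl
  have hσ3 : σ ^ 3 = 1 := MulAut.toAddMonoidEnd_injective _ (by rw [map_pow, hσ, hρ3, map_one])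
  have hσ1 : σ = 1 := orderOf_eq_one_iff.mp <|
    (h.orderOf_coprime (by norm_num) σ).eq_one_of_dvd (orderOf_dvd_of_pow_eq_one hσ3)
  exact hρ1 (by rw [← hσ, hσ1, map_one])

theorem stmt8_general (k : ℕ) (n : Fin k → ℕ) (hn : ∀ i, 1 ≤ n i) :
    IsPGroup 2 (MulAut (∀ i : Fin k, Multiplicative (ZMod (2 ^ n i)))) ↔
      Function.Injective n := by
  have e := MulAut.congr (MulEquiv.piMultiplicative fun i => ZMod (2 ^ n i))
  exact ⟨fun h => injective_of_isPGroup_two_mulAut hn (h.of_equiv e.symm),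
    fun h => (isPGroup_two_mulAut_of_injective h).of_equiv e⟩

theorem stmt8 (k : ℕ) (hk : 1 ≤ k) (n : Fin k → ℕ) (hn : ∀ i, 1 ≤ n i) :
    IsPGroup 2 (MulAut (∀ i : Fin k, Multiplicative (ZMod (2 ^ n i)))) ↔
      Function.Injective n :=
  stmt8_general k n hn
end

section
/- Let P ≅ C_{2^s} × C₂ × C₂ with s ≥ 1, and let α be an automorphism of P of order 3. Then the fixed-point subgroup C_P(α) = {b ∈ P : α(b) = b} is cyclic of order 2^s. -/
/-!
Transport `α` along `e` to an automorphism `β` of order 3 of `M = C_{2^s} × C₂ × C₂`, and let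
`g = (1, 0, 0)`. The squares of `M` form the cyclic group `⟨g²⟩` of order `2^(s-1)`, which `β`
preserves; since `y^(m³) = y` forces `y^m = y` in a cyclic 2-group (`m² + m + 1` is odd), `β` fixes
every square. Hence `2^(s-1)` divides `|C_M(β)|`, a power of 2 that differs from `|M| = 2^(s+2)`
and is congruent to it mod 3 (the orbits of `⟨β⟩` have size 1 or 3): this leaves `2^s`.
For `s ≥ 2` the norm `g · β g · β² g` is fixed, and its `2^(s-1)`-th power is the norm of the fixed
square `g^(2^(s-1))`, i.e. its cube `g^(2^(s-1)) ≠ 1`; so it generates `C_M(β)`.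
-/

open Subgroup

theorem pow_eq_self_of_pow_cube_eq_self {G : Type*} [Group G] {y : G} {k : ℕ}
    (hy : orderOf y = 2 ^ k) {m : ℤ} (h : y ^ (m ^ 3) = y) : y ^ m = y := by
  have hodd : IsCoprime (2 : ℤ) (m ^ 2 + m + 1) := by
    rw [Prime.coprime_iff_not_dvd Int.prime_two, ← even_iff_two_dvd, Int.not_even_iff_odd]
    have := Int.even_mul_succ_self m
    exact (by ring : m * (m + 1) + 1 = m ^ 2 + m + 1) ▸ this.add_one
  have hdvd : ((2 ^ k : ℕ) : ℤ) ∣ (m - 1) * (m ^ 2 + m + 1) := by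
    rw [← hy, orderOf_dvd_iff_zpow_eq_one, (by ring : (m - 1) * (m ^ 2 + m + 1) = m ^ 3 - 1),
      zpow_sub, h, zpow_one, mul_inv_cancel]
  have : y ^ (m - 1) = 1 := by
    rw [← orderOf_dvd_iff_zpow_eq_one, hy]
    push_cast at hdvd ⊢
    exact (hodd.pow_left).dvd_of_dvd_mul_right hdvd
  rwa [zpow_sub_one, mul_inv_eq_one] at this

theorem MulAut.apply_apply_apply_of_pow_three {G : Type*} [Mul G] {α : MulAut G}
    (hα : α ^ 3 = 1) (x : G) : α (α (α x)) = x := by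
  simpa [pow_three'] using DFunLike.congr_fun hα x

theorem MulAut.apply_eq_self_of_apply_mem_zpowers {G : Type*} [Group G] {α : MulAut G}
    (hα : α ^ 3 = 1) {y : G} {k : ℕ} (hy : orderOf y = 2 ^ k) (hαy : α y ∈ zpowers y) :
    α y = y := by
  obtain ⟨m, hm : y ^ m = α y⟩ := hαy
  have hcube : y ^ (m ^ 3) = y := by
    calc y ^ (m ^ 3) = α (α (α y)) := by simp only [← hm, map_zpow, ← zpow_mul]; ring_nf
      _ = y := MulAut.apply_apply_apply_of_pow_three hα y
  rw [← hm, pow_eq_self_of_pow_cube_eq_self hy hcube]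

theorem MulAut.card_eqLocus_modEq {G : Type*} [Group G] [Finite G] {p : ℕ} [Fact p.Prime]
    (α : MulAut G) (hα : orderOf α = p) :
    Nat.card (α.toMonoidHom.eqLocus (MonoidHom.id G)) ≡ Nat.card G [MOD p] := by
  have hP : IsPGroup p (zpowers α) :=
    IsPGroup.of_card (n := 1) (by rw [Nat.card_zpowers, hα, pow_one])
  have hfix : ∀ x : G, x ∈ MulAction.fixedPoints (zpowers α) G ↔ α x = x := by
    refine fun x ↦ ⟨fun h ↦ h ⟨α, mem_zpowers α⟩, ?_⟩
    rintro h ⟨_, j, rfl⟩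
    exact MulAction.mem_fixedBy_zpow (g := α) h j
  calc Nat.card (α.toMonoidHom.eqLocus (MonoidHom.id G))
      = Nat.card (MulAction.fixedPoints (zpowers α) G) :=
        Nat.card_congr (Equiv.subtypeEquivRight fun x ↦ (hfix x).symm)
    _ ≡ Nat.card G [MOD p] := (hP.card_modEq_card_fixedPoints G).symm

section Norm
variable {G : Type*} [CommMonoid G]

def MulAut.norm3 (α : MulAut G) : G →* G :=
  MonoidHom.id G * α.toMonoidHom * (α ^ 2).toMonoidHom

theorem MulAut.norm3_apply (α : MulAut G) (x : G) : α.norm3 x = x * α x * α (α x) := by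
  simp [MulAut.norm3, pow_two]

theorem MulAut.apply_norm3 {α : MulAut G} (hα : α ^ 3 = 1) (x : G) :
    α (α.norm3 x) = α.norm3 x := by
  rw [MulAut.norm3_apply, map_mul, map_mul, MulAut.apply_apply_apply_of_pow_three hα, mul_comm,
    ← mul_assoc]

theorem MulAut.norm3_eq_pow_three {α : MulAut G} {x : G} (hx : α x = x) : α.norm3 x = x ^ 3 := by
  rw [MulAut.norm3_apply, hx, hx, pow_three, mul_assoc]

end Norm

theorem eq_of_two_pow_modEq_three {j s : ℕ} (h₁ : s ≤ j + 1) (h₂ : j ≤ s + 1)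
    (h : 2 ^ j ≡ 2 ^ s [MOD 3]) : j = s := by
  have hndvd : ∀ k, ¬ 3 ∣ 2 ^ k := fun k h3 ↦ by
    have := Nat.prime_three.dvd_of_dvd_pow h3; omega
  unfold Nat.ModEq at h
  rcases (by omega : j = s ∨ s = j + 1 ∨ j = s + 1) with hj | rfl | rfl
  · exact hj
  · rw [pow_succ] at h; have := hndvd j; omega
  · rw [pow_succ] at h; have := hndvd s; omega

abbrev C2sC2C2 (s : ℕ) : Type :=
  Multiplicative (ZMod (2 ^ s)) × Multiplicative (ZMod 2) × Multiplicative (ZMod 2)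

namespace C2sC2C2

variable {s : ℕ}

theorem card : Nat.card (C2sC2C2 s) = 2 ^ (s + 2) := by
  simp [pow_add]

def gen (s : ℕ) : C2sC2C2 s := (Multiplicative.ofAdd 1, 1, 1)

theorem orderOf_gen : orderOf (gen s) = 2 ^ s := by
  simp [gen, Prod.orderOf_mk, orderOf_ofAdd_eq_addOrderOf]

theorem sq_mem_zpowers_gen_sq (x : C2sC2C2 s) : x ^ 2 ∈ zpowers (gen s ^ 2) := by
  obtain ⟨a, b, c⟩ := x
  refine ⟨(a.toAdd.val : ℤ), show (gen s ^ 2) ^ (a.toAdd.val : ℤ) = _ from ?_⟩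
  have h2 : ∀ z : Multiplicative (ZMod 2), z ^ 2 = 1 := by decide
  rw [zpow_natCast, ← pow_mul, mul_comm, pow_mul]
  simp only [gen, Prod.pow_mk, one_pow, ← ofAdd_nsmul, nsmul_eq_mul, mul_one,
    ZMod.natCast_zmod_val, ofAdd_toAdd, h2]

theorem orderOf_gen_sq (hs : 1 ≤ s) : orderOf (gen s ^ 2) = 2 ^ (s - 1) := by
  rw [orderOf_pow_of_dvd two_ne_zero, orderOf_gen, ← Nat.pow_div hs two_pos, pow_one]
  rw [orderOf_gen]; exact dvd_pow_self 2 (by omega)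

variable {β : MulAut (C2sC2C2 s)}

theorem apply_sq (hs : 1 ≤ s) (hβ : β ^ 3 = 1) (x : C2sC2C2 s) : β (x ^ 2) = x ^ 2 := by
  have hgen : β (gen s ^ 2) = gen s ^ 2 :=
    β.apply_eq_self_of_apply_mem_zpowers hβ (orderOf_gen_sq hs)
      (by rw [map_pow]; exact sq_mem_zpowers_gen_sq _)
  obtain ⟨n, hn : (gen s ^ 2) ^ n = x ^ 2⟩ := sq_mem_zpowers_gen_sq x
  rw [← hn, map_zpow, hgen]

theorem card_eqLocus (hs : 1 ≤ s) (hβ : orderOf β = 3) :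
    Nat.card (β.toMonoidHom.eqLocus (MonoidHom.id _)) = 2 ^ s := by
  set C := β.toMonoidHom.eqLocus (MonoidHom.id (C2sC2C2 s))
  have hβ3 : β ^ 3 = 1 := hβ ▸ pow_orderOf_eq_one β
  obtain ⟨j, hj_le, hj⟩ := (Nat.dvd_prime_pow Nat.prime_two).1
    (card (s := s) ▸ C.card_subgroup_dvd_card)
  have hlow : 2 ^ (s - 1) ∣ 2 ^ j := by
    have hmem : gen s ^ 2 ∈ C := apply_sq hs hβ3 (gen s)
    rw [← hj, ← orderOf_gen_sq hs, ← Subgroup.orderOf_mk _ hmem]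
    exact orderOf_dvd_natCard _
  have hmod : 2 ^ j ≡ 2 ^ (s + 2) [MOD 3] := hj ▸ card (s := s) ▸ β.card_eqLocus_modEq hβ
  have hne : j ≠ s + 2 := by
    rintro rfl
    have hC : C = ⊤ := C.card_eq_iff_eq_top.1 (hj.trans card.symm)
    have : β = 1 := MulEquiv.ext fun x ↦ (hC ▸ Subgroup.mem_top x : x ∈ C)
    simp [this] at hβ
  have hj_low : s - 1 ≤ j := (Nat.pow_dvd_pow_iff_le_right one_lt_two).1 hlow
  have h4 : 2 ^ (s + 2) ≡ 2 ^ s [MOD 3] := by unfold Nat.ModEq; rw [pow_add]; omega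
  rw [hj, eq_of_two_pow_modEq_three (by omega) (by omega) (hmod.trans h4)]

theorem isCyclic_eqLocus (hs : 1 ≤ s) (hβ : orderOf β = 3) :
    IsCyclic (β.toMonoidHom.eqLocus (MonoidHom.id _)) := by
  set C := β.toMonoidHom.eqLocus (MonoidHom.id (C2sC2C2 s))
  have hcard : Nat.card C = 2 ^ s := card_eqLocus hs hβ
  have hβ3 : β ^ 3 = 1 := hβ ▸ pow_orderOf_eq_one β
  obtain rfl | hs2 : s = 1 ∨ 2 ≤ s := by omega
  · have : Fact (Nat.Prime (Nat.card C)) := ⟨by rw [hcard, pow_one]; exact Nat.prime_two⟩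
    exact isCyclic_of_prime_card rfl
  set h : C := ⟨β.norm3 (gen s), MulAut.apply_norm3 hβ3 _⟩
  -- `gen s ^ 2 ^ (s - 1)` is a fixed square of order 2, so its norm is its cube, i.e. itself.
  have hlast : h ^ 2 ^ (s - 1) ≠ 1 := by
    have hsq : gen s ^ 2 ^ (s - 1) = (gen s ^ 2 ^ (s - 2)) ^ 2 := by
      rw [← pow_mul, ← pow_succ]; congr 2; omega
    have hfix : β (gen s ^ 2 ^ (s - 1)) = gen s ^ 2 ^ (s - 1) := hsq ▸ apply_sq (by omega) hβ3 _
    have hgen : gen s ^ 2 ^ (s - 1) ≠ 1 := pow_ne_one_of_lt_orderOf (pow_pos two_pos _).ne'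
      (by rw [orderOf_gen]; exact Nat.pow_lt_pow_right one_lt_two (by omega))
    have hgen_sq : (gen s ^ 2 ^ (s - 1)) ^ 2 = 1 := by
      rw [← pow_mul, ← pow_succ, Nat.sub_add_cancel hs]
      simpa [orderOf_gen] using pow_orderOf_eq_one (gen s)
    rwa [Ne, ← OneMemClass.coe_eq_one, SubmonoidClass.coe_pow, ← map_pow,
      MulAut.norm3_eq_pow_three hfix, (by norm_num : 3 = 2 + 1), pow_succ, hgen_sq, one_mul]
  have horder : orderOf h = 2 ^ s := by
    have hpow : h ^ 2 ^ (s - 1 + 1) = 1 := by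
      rw [Nat.sub_add_cancel hs]
      exact orderOf_dvd_iff_pow_eq_one.1 ((orderOf_dvd_natCard h).trans hcard.dvd)
    rw [orderOf_eq_prime_pow hlast hpow, Nat.sub_add_cancel hs]
  exact isCyclic_of_orderOf_eq_card h (horder.trans hcard.symm)

end C2sC2C2

def MulEquiv.eqLocusMulAutCongr {G H : Type*} [Group G] [Group H] (e : G ≃* H) (α : MulAut G) :
    α.toMonoidHom.eqLocus (MonoidHom.id G) ≃*
      (MulAut.congr e α).toMonoidHom.eqLocus (MonoidHom.id H) :=
  (e.subgroupMap _).trans <| MulEquiv.subgroupCongr <| by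
    ext y
    exact Subgroup.mem_map_equiv.trans e.toEquiv.eq_symm_apply

theorem stmt9 (s : ℕ) (hs : 1 ≤ s)
    (P : Type*) [Group P]
    (e : P ≃* Multiplicative (ZMod (2 ^ s)) × Multiplicative (ZMod 2) ×
      Multiplicative (ZMod 2))
    (α : MulAut P) (hα : orderOf α = 3) :
    IsCyclic (α.toMonoidHom.eqLocus (MonoidHom.id P)) ∧
    Nat.card (α.toMonoidHom.eqLocus (MonoidHom.id P)) = 2 ^ s := by
  have hβ : orderOf (MulAut.congr e α) = 3 := (MulEquiv.orderOf_eq _ α).trans hα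
  let φ := e.eqLocusMulAutCongr α
  exact ⟨φ.isCyclic.2 (C2sC2C2.isCyclic_eqLocus hs hβ),
    (Nat.card_congr φ.toEquiv).trans (C2sC2C2.card_eqLocus hs hβ)⟩
end

section
/- Let P ≅ C_{2^s} × C₂ × C₂ with s ≥ 1. Then 3 divides |Aut(P)| but 9 does not divide |Aut(P)|. -/
/-!
Reduction modulo `2` gives a homomorphism `Aut(P) → Aut(P/2P) ≅ GL₃(𝔽₂)`, a group of order
`168 = 2³·3·7`. An automorphism `f` in its kernel is unipotent: `f - 1` maps `P` into `2P`, so it is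
nilpotent in `End(P)` because `2^s` kills `P`. If moreover `f³ = 1`, then
`0 = f³ - 1 = (f - 1)(f² + f + 1)` with `f² + f + 1 = 3 + (nilpotent)` a unit, as `3` is invertible
on a `2`-group; hence `f = 1`. By Cauchy the kernel has order prime to `3`, so `9 ∤ |Aut(P)|`.
On the other hand `Aut(C₂ × C₂) ≅ GL₂(𝔽₂)` has order `6` and embeds into `Aut(P)`, so `3 ∣ |Aut(P)|`.
-/

open Finset in
theorem eq_one_of_pow_eq_one_of_isNilpotent_sub_one {R : Type*} [Ring R] {x : R} {n : ℕ}
    (hn : IsUnit (n : R)) (hx : IsNilpotent (x - 1)) (hxn : x ^ n = 1) : x = 1 := by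
  set q := ∑ i ∈ range n, ∑ j ∈ range i, x ^ j
  have hsum : ∑ i ∈ range n, x ^ i = n + q * (x - 1) := by
    rw [sum_mul]
    simp only [geom_sum_mul, sum_sub_distrib, sum_const, card_range, nsmul_eq_mul, mul_one]
    abel
  have hcomm : Commute (x - 1) q :=
    .sum_right _ _ _ fun i _ => .sum_right _ _ _ fun j _ =>
      ((Commute.refl x).sub_left (Commute.one_left x)).pow_right j
  have hunit : IsUnit (∑ i ∈ range n, x ^ i) := by
    rw [hsum]
    exact (hcomm.symm.isNilpotent_mul_left hx).isUnit_add_left_of_commute hn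
      (Nat.cast_commute _ _).symm
  rw [← sub_eq_zero, ← hunit.mul_right_eq_zero, geom_sum_mul, hxn, sub_self]

namespace AddMonoid.End

variable {A : Type*} [AddCommGroup A]

theorem isUnit_natCast_of_coprime {e k : ℕ} (hA : ∀ a : A, e • a = 0) (hk : k.Coprime e) :
    IsUnit (k : AddMonoid.End A) := by
  have he : (e : AddMonoid.End A) = 0 := by
    ext a
    exact hA a
  have hbezout : ((k * k.gcdA e + e * k.gcdB e : ℤ) : AddMonoid.End A) = 1 := by
    rw [← Nat.gcd_eq_gcd_ab, hk.gcd_eq_one, Nat.cast_one, Int.cast_one]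
  have hinv : (k : AddMonoid.End A) * (k.gcdA e : AddMonoid.End A) = 1 := by
    simpa [he] using hbezout
  exact isUnit_iff_exists.mpr ⟨_, hinv, (Nat.cast_commute _ _).eq.symm.trans hinv⟩

theorem isNilpotent_of_forall_mem_range_nsmul {m n : ℕ} (hA : ∀ a : A, m ^ n • a = 0)
    (δ : AddMonoid.End A) (hδ : ∀ a, δ a ∈ (nsmulAddMonoidHom m).range) : IsNilpotent δ := by
  have hpow : ∀ k a, ∃ c, (δ ^ k) a = m ^ k • c := by
    intro k
    induction k with
    | zero => exact fun a => ⟨a, by simp⟩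
    | succ k ih =>
      intro a
      obtain ⟨c, hc⟩ := hδ a
      obtain ⟨d, hd⟩ := ih c
      refine ⟨d, ?_⟩
      rw [pow_succ, coe_mul, Function.comp_apply, ← hc, nsmulAddMonoidHom_apply, map_nsmul, hd,
        pow_succ', mul_nsmul']
  refine ⟨n, ?_⟩
  ext a
  obtain ⟨c, hc⟩ := hpow n a
  rw [hc, hA, zero_apply]

theorem eq_one_of_pow_eq_one_of_forall_sub_mem_range_nsmul {m n k : ℕ}
    (hA : ∀ a : A, m ^ n • a = 0) (hk : k.Coprime m) (f : AddMonoid.End A) (hfk : f ^ k = 1)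
    (hf : ∀ a, f a - a ∈ (nsmulAddMonoidHom m).range) : f = 1 :=
  eq_one_of_pow_eq_one_of_isNilpotent_sub_one (isUnit_natCast_of_coprime hA (hk.pow_right n))
    (isNilpotent_of_forall_mem_range_nsmul hA _ hf) hfk

end AddMonoid.End

theorem AddMonoidHom.dvd_card_of_coprime_card_ker {G H : Type*} [AddGroup G] [AddGroup H]
    (φ : G →+ H) {d : ℕ} (hd : d ∣ Nat.card G) (hker : d.Coprime (Nat.card φ.ker)) :
    d ∣ Nat.card H := by
  rw [φ.ker.card_eq_card_quotient_mul_card_addSubgroup,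
    Nat.card_congr (QuotientAddGroup.quotientKerEquivRange φ).toEquiv] at hd
  exact (hker.dvd_of_dvd_mul_right hd).trans φ.range.card_addSubgroup_dvd_card

namespace AddAut

variable {A : Type*} [AddCommGroup A]

theorem coe_nsmul (f : AddAut A) (n : ℕ) : ⇑(n • f) = f^[n] := by
  induction n with
  | zero => rfl
  | succ n ih => rw [succ_nsmul, coe_add, ih, Function.iterate_succ]

def reduceMod (m : ℕ) : AddAut A →+ AddAut (A ⧸ (nsmulAddMonoidHom m).range) where
  toFun f := QuotientAddGroup.congr _ _ f (f.map_range_nsmulAddMonoidHom m)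
  map_zero' := by
    ext x
    induction x using QuotientAddGroup.induction_on
    rfl
  map_add' f g := by
    ext x
    induction x using QuotientAddGroup.induction_on
    rfl

theorem reduceMod_eq_zero_iff {m : ℕ} {f : AddAut A} :
    reduceMod m f = 0 ↔ ∀ a, f a - a ∈ (nsmulAddMonoidHom m).range := by
  simp only [AddEquiv.ext_iff, QuotientAddGroup.forall_mk]
  exact forall_congr' fun a => QuotientAddGroup.eq_iff_sub_mem

theorem not_dvd_card_ker_reduceMod [Finite A] {m n k : ℕ} (hA : ∀ a : A, m ^ n • a = 0)
    (hk : k.Prime) (hkm : k.Coprime m) : ¬ k ∣ Nat.card (reduceMod (A := A) m).ker := by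
  have : Fact k.Prime := ⟨hk⟩
  intro h
  obtain ⟨g, hg⟩ := exists_prime_addOrderOf_dvd_card' k h
  have hgk : k • (g : AddAut A) = 0 := by
    rw [← hg, ← AddSubgroup.coe_nsmul, addOrderOf_nsmul_eq_zero, ZeroMemClass.coe_zero]
  let F : AddMonoid.End A := (g : AddAut A).toAddMonoidHom
  have hFk : F ^ k = 1 := by
    ext a
    change (⇑(g : AddAut A))^[k] a = a
    rw [← coe_nsmul, hgk, zero_apply]
  have hF : F = 1 := AddMonoid.End.eq_one_of_pow_eq_one_of_forall_sub_mem_range_nsmul hA hkm F hFk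
    (reduceMod_eq_zero_iff.mp g.2)
  have hg0 : g = 0 := by
    ext a
    exact DFunLike.congr_fun hF a
  rw [hg0, addOrderOf_zero] at hg
  exact hk.one_lt.ne hg

theorem card_eq_card_GL {p n : ℕ} [Fact p.Prime] {V : Type*} [AddCommGroup V]
    [Module (ZMod p) V] [Module.Finite (ZMod p) V] (hV : Module.finrank (ZMod p) V = n) :
    Nat.card (AddAut V) = Nat.card (GL (Fin n) (ZMod p)) := by
  subst hV
  let toLinear : AddAut V ≃ (V ≃ₗ[ZMod p] V) :=
    { toFun := fun e => e.toLinearEquiv (ZMod.map_smul e)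
      invFun := LinearEquiv.toAddEquiv
      left_inv := fun _ => rfl
      right_inv := fun _ => rfl }
  exact Nat.card_congr <| toLinear.trans <|
    (LinearMap.GeneralLinearGroup.generalLinearEquiv _ _).symm.toEquiv.trans
      (Units.mapEquiv (LinearMap.toMatrixAlgEquiv (Module.finBasis (ZMod p) V)).toMulEquiv).toEquiv

theorem card_dvd_card_prod (X V : Type*) [AddGroup X] [AddGroup V] :
    Nat.card (AddAut V) ∣ Nat.card (AddAut (X × V)) := by
  refine AddSubgroup.card_dvd_of_injective
    ⟨⟨fun f => (AddEquiv.refl X).prodCongr f, rfl⟩, fun _ _ => rfl⟩ fun f g hfg => ?_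
  ext v
  exact congrArg Prod.snd (DFunLike.congr_fun hfg (0, v))

end AddAut

theorem ZMod.ker_castHom {m n : ℕ} (h : m ∣ n) :
    (ZMod.castHom h (ZMod m)).toAddMonoidHom.ker = (nsmulAddMonoidHom m : ZMod n →+ ZMod n).range := by
  ext x
  constructor
  · intro hx
    obtain ⟨z, rfl⟩ := ZMod.intCast_surjective x
    obtain ⟨w, rfl⟩ : (m : ℤ) ∣ z := by simpa [ZMod.intCast_zmod_eq_zero_iff_dvd] using hx
    exact ⟨w, by simp⟩
  · rintro ⟨c, rfl⟩
    rw [AddMonoidHom.mem_ker, nsmulAddMonoidHom_apply, map_nsmul, nsmul_eq_mul, ZMod.natCast_self,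
      zero_mul]

theorem AddMonoidHom.ker_prodMap_id {X Y V : Type*} [AddCommGroup X] [AddCommGroup Y]
    [AddCommGroup V] {m : ℕ} (ψ : X →+ Y) (hψ : ψ.ker = (nsmulAddMonoidHom m).range)
    (hV : ∀ v : V, m • v = 0) :
    (ψ.prodMap (AddMonoidHom.id V)).ker = (nsmulAddMonoidHom m).range := by
  ext ⟨x, v⟩
  have hx : ψ x = 0 ↔ ∃ c, m • c = x := SetLike.ext_iff.mp hψ x
  simp only [mem_ker, coe_prodMap, coe_id, Prod.map_apply, id_eq, Prod.ext_iff, Prod.fst_zero, hx,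
    Prod.snd_zero, mem_range, nsmulAddMonoidHom_apply, Prod.smul_fst, Prod.smul_snd, hV,
    exists_and_right, Prod.exists, exists_const, and_congr_right_iff, forall_exists_index]
  exact fun _ _ => eq_comm

noncomputable def ZMod.prodQuotientRangeNsmulEquiv {m n : ℕ} (h : m ∣ n) (V : Type*)
    [AddCommGroup V] (hV : ∀ v : V, m • v = 0) :
    (ZMod n × V) ⧸ (nsmulAddMonoidHom m).range ≃+ ZMod m × V :=
  (QuotientAddGroup.quotientAddEquivOfEq
    ((ZMod.castHom h (ZMod m)).toAddMonoidHom.ker_prodMap_id (ZMod.ker_castHom h) hV).symm).trans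
    (QuotientAddGroup.quotientKerEquivOfSurjective _
      ((ZMod.castHom_surjective h).prodMap Function.surjective_id))

theorem card_mulAut_prod_multiplicative (X Y Z : Type*) [AddGroup X] [AddGroup Y] [AddGroup Z] :
    Nat.card (MulAut (Multiplicative X × Multiplicative Y × Multiplicative Z)) =
      Nat.card (AddAut (X × Y × Z)) := by
  let e : Multiplicative (X × Y × Z) ≃* Multiplicative X × Multiplicative Y × Multiplicative Z :=
    (MulEquiv.prodMultiplicative X (Y × Z)).trans
      ((MulEquiv.refl _).prodCongr (MulEquiv.prodMultiplicative Y Z))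
  exact Nat.card_congr ((MulAut.congr e).symm.trans (MulAutMultiplicative _)).toEquiv

theorem two_nsmul_zmod_two_prod (v : ZMod 2 × ZMod 2) : 2 • v = 0 := by
  revert v
  decide

theorem two_pow_nsmul_eq_zero {s : ℕ} (hs : 1 ≤ s) (a : ZMod (2 ^ s) × ZMod 2 × ZMod 2) :
    2 ^ s • a = 0 := by
  obtain ⟨c, hc⟩ : 2 ∣ 2 ^ s := dvd_pow_self 2 (by omega)
  obtain ⟨x, v⟩ := a
  rw [Prod.smul_mk, Prod.mk_eq_zero]
  constructor
  · rw [nsmul_eq_mul, ZMod.natCast_self, zero_mul]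
  · rw [hc, mul_nsmul, two_nsmul_zmod_two_prod, nsmul_zero]

theorem card_addAut_zmod_two_prod : Nat.card (AddAut (ZMod 2 × ZMod 2)) = 6 := by
  rw [AddAut.card_eq_card_GL (p := 2) (n := 2) (by simp), Matrix.card_GL_field]
  simp [Fin.prod_univ_two]

theorem card_addAut_zmod_two_prod_prod : Nat.card (AddAut (ZMod 2 × ZMod 2 × ZMod 2)) = 168 := by
  rw [AddAut.card_eq_card_GL (p := 2) (n := 3) (by simp), Matrix.card_GL_field]
  simp [Fin.prod_univ_three]

theorem stmt10 (s : ℕ) (hs : 1 ≤ s) :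
    3 ∣ Nat.card (MulAut (Multiplicative (ZMod (2 ^ s)) × Multiplicative (ZMod 2) ×
      Multiplicative (ZMod 2))) ∧
    ¬ 9 ∣ Nat.card (MulAut (Multiplicative (ZMod (2 ^ s)) × Multiplicative (ZMod 2) ×
      Multiplicative (ZMod 2))) := by
  rw [card_mulAut_prod_multiplicative]
  refine ⟨?_, fun h9 => ?_⟩
  · have h := AddAut.card_dvd_card_prod (ZMod (2 ^ s)) (ZMod 2 × ZMod 2)
    rw [card_addAut_zmod_two_prod] at h
    exact (by norm_num : 3 ∣ 6).trans h
  · have hker := AddAut.not_dvd_card_ker_reduceMod (two_pow_nsmul_eq_zero hs) Nat.prime_three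
      (by norm_num : Nat.Coprime 3 2)
    have h := (AddAut.reduceMod 2).dvd_card_of_coprime_card_ker h9
      (Nat.Coprime.pow_left 2 ((Nat.Prime.coprime_iff_not_dvd Nat.prime_three).mpr hker))
    rw [Nat.card_congr (AddAut.congr (ZMod.prodQuotientRangeNsmulEquiv
      (dvd_pow_self 2 (by omega)) _ two_nsmul_zmod_two_prod)).toEquiv,
      card_addAut_zmod_two_prod_prod] at h
    norm_num at h
end
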